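/- arXiv:1809.08153 — 8 statements merged into one kernel-verified Lean document; each statement's English description precedes it below -/
import Mathlib

section
/- Suppose |PROP| ≥ ℵ₀. Then for every class V_S of pointed Routley–Meyer models with {(M,T) : M an RM-model} ⊆ V_S ⊆ {(M,T) : M a B-model}, there is no set Γ of formulas of the finitary relevant language L_{ωω}→ such that for every (M,T) ∈ V_S: (M,T) satisfies every formula of Γ if and only if (M,T) is inconsistent. That is, inconsistency is not a property of models axiomatizable in L_{ωω}→ with respect to V_S. -/
universe u

/-- Formulas of the infinitary relevant language with absurdity `L_{∞ω}→` over
propositional variables `P`.  Conjunctions and disjunctions are indexed by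
arbitrary (set-sized) index types. -/
inductive RelForm (P : Type u) : Type (u + 1)
  | atom : P → RelForm P
  | bot : RelForm P
  | neg : RelForm P → RelForm P
  | conj : (ι : Type u) → (ι → RelForm P) → RelForm P
  | disj : (ι : Type u) → (ι → RelForm P) → RelForm P
  | imp : RelForm P → RelForm P → RelForm P

/-- A Routley–Meyer model. -/
structure RMModel (P : Type u) : Type (u + 1) where
  W : Type u
  nonempty : Nonempty W
  R : W → W → W → Prop
  star : W → W
  V : P → W → Prop

/-- Routley–Meyer satisfaction. -/
def RMModel.sat {P : Type u} (M : RMModel P) : M.W → RelForm P → Prop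
  | w, .atom p => M.V p w
  | _, .bot => False
  | w, .neg φ => ¬ M.sat (M.star w) φ
  | w, .conj _ f => ∀ i, M.sat w (f i)
  | w, .disj _ f => ∃ i, M.sat w (f i)
  | w, .imp φ ψ => ∀ a b, M.R w a b → M.sat a φ → M.sat b ψ

/-- The degree of an infinitary relevant formula. -/
noncomputable def RelForm.deg {P : Type u} : RelForm P → Ordinal.{u}
  | .atom _ => 0
  | .bot => 0
  | .neg φ => φ.deg
  | .conj _ f => ⨆ i, (f i).deg
  | .disj _ f => ⨆ i, (f i).deg
  | .imp φ ψ => max φ.deg ψ.deg + 1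

/-- A formula lies in the fragment `L_{κω}→` : all its conjunctions and
disjunctions have index sets of cardinality `< κ`. -/
def RelForm.indexBound {P : Type u} (κ : Cardinal.{u}) : RelForm P → Prop
  | .atom _ => True
  | .bot => True
  | .neg φ => φ.indexBound κ
  | .conj ι f => Cardinal.mk ι < κ ∧ ∀ i, (f i).indexBound κ
  | .disj ι f => Cardinal.mk ι < κ ∧ ∀ i, (f i).indexBound κ
  | .imp φ ψ => φ.indexBound κ ∧ ψ.indexBound κ

/-- The propositional variables occurring in a relevant formula. -/
def RelForm.props {P : Type u} : RelForm P → Set P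
  | .atom p => {p}
  | .bot => ∅
  | .neg φ => φ.props
  | .conj _ f => ⋃ i, (f i).props
  | .disj _ f => ⋃ i, (f i).props
  | .imp φ ψ => φ.props ∪ ψ.props

/-- The B-model frame/valuation conditions, for the pointed model `(M, T)`. -/
def IsBModel {P : Type u} (M : RMModel P) (T : M.W) : Prop :=
  (∀ x, M.R T x x) ∧
  (∀ x v y z, M.R T x v → M.R v y z → M.R x y z) ∧
  (∀ x, M.star (M.star x) = x) ∧
  (∀ x y, M.R T x y → M.R T (M.star y) (M.star x)) ∧
  (∀ p x y, M.V p x → M.R T x y → M.V p y)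

/-- The RM-model conditions, for the pointed model `(M, T)`. -/
def IsRMModel {P : Type u} (M : RMModel P) (T : M.W) : Prop :=
  IsBModel M T ∧
  (∀ z x y, M.R z x y → M.R z (M.star y) (M.star x)) ∧
  (∀ x y z v, (∃ u, M.R x y u ∧ M.R u z v) → (∃ u, M.R x u v ∧ M.R y z u)) ∧
  (∀ x, M.R x x x) ∧
  (∀ x y z, M.R x y z → M.R y x z) ∧
  (∀ x y z, M.R x y z → M.R T x z ∨ M.R T y z)

/-- A pointed model `(M, T)` is inconsistent if `p ∧ ~p` holds at `T`
for some propositional variable `p`. -/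
def Inconsistent {P : Type u} (M : RMModel P) (T : M.W) : Prop :=
  ∃ p : P, M.sat T (.atom p) ∧ M.sat T (.neg (.atom p))

/-- A relevant directed bisimulation between `M₁` and `M₂` for the set `Q` of
propositional variables. -/
structure IsRelDirectedBisim {P : Type u} (Q : Set P) (M₁ M₂ : RMModel P)
    (Z₁ : M₁.W → M₂.W → Prop) (Z₂ : M₂.W → M₁.W → Prop) : Prop where
  nonempty₁ : ∃ x y, Z₁ x y
  nonempty₂ : ∃ x y, Z₂ x y
  star₁ : ∀ x y, Z₁ x y → Z₂ (M₂.star y) (M₁.star x)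
  star₂ : ∀ x y, Z₂ x y → Z₁ (M₁.star y) (M₂.star x)
  back₁ : ∀ x y b c, Z₁ x y → M₂.R y b c →
    ∃ b' c', M₁.R x b' c' ∧ Z₂ b b' ∧ Z₁ c' c
  back₂ : ∀ x y b c, Z₂ x y → M₁.R y b c →
    ∃ b' c', M₂.R x b' c' ∧ Z₁ b b' ∧ Z₂ c' c
  atom₁ : ∀ x y, Z₁ x y → ∀ p ∈ Q, M₁.V p x → M₂.V p y
  atom₂ : ∀ x y, Z₂ x y → ∀ p ∈ Q, M₂.V p x → M₁.V p y

/-- A relevant directed α-bisimulation between `M₁` and `M₂` (for all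
propositional variables): a system of pairs of nonempty relations
`⟨Z₁ β, Z₂ β⟩` for `β ≤ α`, decreasing in `β`. -/
structure IsRelDirectedAlphaBisim {P : Type u} (M₁ M₂ : RMModel P) (α : Ordinal.{u})
    (Z₁ : Ordinal.{u} → M₁.W → M₂.W → Prop)
    (Z₂ : Ordinal.{u} → M₂.W → M₁.W → Prop) : Prop where
  nonempty₁ : ∀ β ≤ α, ∃ x y, Z₁ β x y
  nonempty₂ : ∀ β ≤ α, ∃ x y, Z₂ β x y
  anti₁ : ∀ β γ, β ≤ γ → γ ≤ α → ∀ x y, Z₁ γ x y → Z₁ β x y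
  anti₂ : ∀ β γ, β ≤ γ → γ ≤ α → ∀ x y, Z₂ γ x y → Z₂ β x y
  star₁ : ∀ γ ≤ α, ∀ x y, Z₁ γ x y → Z₂ γ (M₂.star y) (M₁.star x)
  star₂ : ∀ γ ≤ α, ∀ x y, Z₂ γ x y → Z₁ γ (M₁.star y) (M₂.star x)
  back₁ : ∀ β < α, ∀ x y, Z₁ (Order.succ β) x y → ∀ b c, M₂.R y b c →
    ∃ b' c', M₁.R x b' c' ∧ Z₂ β b b' ∧ Z₁ β c' c
  back₂ : ∀ β < α, ∀ x y, Z₂ (Order.succ β) x y → ∀ b c, M₁.R y b c →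
    ∃ b' c', M₂.R x b' c' ∧ Z₁ β b b' ∧ Z₂ β c' c
  atom₁ : ∀ γ ≤ α, ∀ x y, Z₁ γ x y → ∀ p, M₁.V p x → M₂.V p y
  atom₂ : ∀ γ ≤ α, ∀ x y, Z₂ γ x y → ∀ p, M₂.V p x → M₁.V p y

/-! ### The correspondence language `L_{∞ω}^{corr}` -/

/-- Terms of the correspondence language: variables and the Routley star. -/
inductive CTerm : Type
  | var : ℕ → CTerm
  | star : CTerm → CTerm

/-- Formulas of the classical infinitary correspondence language, over the
signature with the ternary relation `R`, the unary function `*` and one unary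
predicate for each element of `P`. -/
inductive CForm (P : Type u) : Type (u + 1)
  | rel : CTerm → CTerm → CTerm → CForm P
  | prop : P → CTerm → CForm P
  | not : CForm P → CForm P
  | and : CForm P → CForm P → CForm P
  | imp : CForm P → CForm P → CForm P
  | conj : (ι : Type u) → (ι → CForm P) → CForm P
  | disj : (ι : Type u) → (ι → CForm P) → CForm P
  | all : ℕ → CForm P → CForm P
  | ex : ℕ → CForm P → CForm P

/-- Evaluation of terms in a Routley–Meyer model, read as a classical
structure. -/
def CTerm.eval {P : Type u} (M : RMModel P) (v : ℕ → M.W) : CTerm → M.W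
  | .var n => v n
  | .star t => M.star (t.eval M v)

/-- Classical (Tarskian) satisfaction for the correspondence language. -/
def CForm.Sat {P : Type u} (M : RMModel P) : (ℕ → M.W) → CForm P → Prop
  | v, .rel t₁ t₂ t₃ => M.R (t₁.eval M v) (t₂.eval M v) (t₃.eval M v)
  | v, .prop p t => M.V p (t.eval M v)
  | v, .not φ => ¬ CForm.Sat M v φ
  | v, .and φ ψ => CForm.Sat M v φ ∧ CForm.Sat M v ψ
  | v, .imp φ ψ => CForm.Sat M v φ → CForm.Sat M v ψ
  | v, .conj _ f => ∀ i, CForm.Sat M v (f i)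
  | v, .disj _ f => ∃ i, CForm.Sat M v (f i)
  | v, .all n φ => ∀ a : M.W, CForm.Sat M (Function.update v n a) φ
  | v, .ex n φ => ∃ a : M.W, CForm.Sat M (Function.update v n a) φ

/-- The predicates (corresponding to propositional variables) occurring in a
correspondence-language formula. -/
def CForm.props {P : Type u} : CForm P → Set P
  | .rel _ _ _ => ∅
  | .prop p _ => {p}
  | .not φ => φ.props
  | .and φ ψ => φ.props ∪ ψ.props
  | .imp φ ψ => φ.props ∪ ψ.props
  | .conj _ f => ⋃ i, (f i).props
  | .disj _ f => ⋃ i, (f i).props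
  | .all _ φ => φ.props
  | .ex _ φ => φ.props

/-- Auxiliary standard translation `T_x(φ)^{t/x}`: the parameter `n` is a
supply of fresh variables (all variables of `t` are `< n`). -/
def stAux {P : Type u} : ℕ → CTerm → RelForm P → CForm P
  | _, t, .bot => .and (.not (.rel t t t)) (.rel t t t)
  | _, t, .atom p => .prop p t
  | n, t, .neg φ => .not (stAux n (.star t) φ)
  | n, t, .conj ι f => .conj ι fun i => stAux n t (f i)
  | n, t, .disj ι f => .disj ι fun i => stAux n t (f i)
  | n, t, .imp φ ψ =>
      .all n (.all (n + 1)
        (.imp (.and (.rel t (.var n) (.var (n + 1))) (stAux (n + 2) (.var n) φ))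
          (stAux (n + 2) (.var (n + 1)) ψ)))

/-- The standard translation `T_x(φ)` with free variable `x = var 0`. -/
def stT {P : Type u} (φ : RelForm P) : CForm P := stAux 1 (.var 0) φ

/-- Satisfaction of a correspondence-language formula with one free variable
`x = var 0` at the element `w`. -/
def CForm.SatAt {P : Type u} (φ : CForm P) (M : RMModel P) (w : M.W) : Prop :=
  CForm.Sat M (fun _ => w) φ

/-- Expansion of a model by interpretations of extra predicates. -/
def RMModel.expand {P Q : Type u} (M : RMModel P) (I : Q → M.W → Prop) :
    RMModel (P ⊕ Q) :=
  { W := M.W, nonempty := M.nonempty, R := M.R, star := M.star,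
    V := Sum.elim M.V I }

/-- A `Σ¹₁` formula over the correspondence language: second-order existential
quantification over a family of extra predicates, in front of a formula. -/
structure Sigma11Form (P : Type u) : Type (u + 1) where
  preds : Type u
  matrix : CForm (P ⊕ preds)

/-- A `Π¹₁` formula over the correspondence language. -/
structure Pi11Form (P : Type u) : Type (u + 1) where
  preds : Type u
  matrix : CForm (P ⊕ preds)

/-- Satisfaction of a `Σ¹₁` formula (one free variable) at a point. -/
def Sigma11Form.SatAt {P : Type u} (φ : Sigma11Form P) (M : RMModel P)
    (w : M.W) : Prop :=
  ∃ I : φ.preds → M.W → Prop, CForm.Sat (M.expand I) (fun _ => w) φ.matrix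

/-- Satisfaction of a `Π¹₁` formula (one free variable) at a point. -/
def Pi11Form.SatAt {P : Type u} (φ : Pi11Form P) (M : RMModel P)
    (w : M.W) : Prop :=
  ∀ I : φ.preds → M.W → Prop, CForm.Sat (M.expand I) (fun _ => w) φ.matrix

/-- Propositional-variable predicates occurring in a `Σ¹₁` formula. -/
def Sigma11Form.props {P : Type u} (φ : Sigma11Form P) : Set P :=
  {p : P | Sum.inl p ∈ φ.matrix.props}

/-- Propositional-variable predicates occurring in a `Π¹₁` formula. -/
def Pi11Form.props {P : Type u} (φ : Pi11Form P) : Set P :=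
  {p : P | Sum.inl p ∈ φ.matrix.props}

/-- `A` implies `B` along relevant directed bisimulations for `Q` over the
class `K`. -/
def ImpliesAlong {P : Type u} (K : RMModel P → Prop) (Q : Set P)
    (A B : (M : RMModel P) → M.W → Prop) : Prop :=
  ∀ M₁ M₂ : RMModel P, K M₁ → K M₂ →
    ∀ (Z₁ : M₁.W → M₂.W → Prop) (Z₂ : M₂.W → M₁.W → Prop),
      IsRelDirectedBisim Q M₁ M₂ Z₁ Z₂ →
        (∀ a b, Z₁ a b → A M₁ a → B M₂ b) ∧ (∀ a b, Z₂ a b → A M₂ a → B M₁ b)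

/-- A Hilbert-style formal system for `L_{κ⁺ω}→`: a set of axioms, and a set of
rules each with fewer than `κ⁺` premises. -/
structure HilbertSystem (P : Type u) (κ : Cardinal.{u}) : Type (u + 1) where
  Axioms : Set (RelForm P)
  Rules : Set ((ι : Type u) × (ι → RelForm P) × RelForm P)
  rules_small : ∀ r ∈ Rules, Cardinal.mk r.1 < Order.succ κ

/-- `Γ ⊢_H φ`: there is a sequence of formulas of length `< κ⁺`, each member of
which is an axiom, a member of `Γ`, or follows from previous members by a rule,
with `φ` occurring (as its last member). -/
def HilbertSystem.Proves {P : Type u} {κ : Cardinal.{u}} (H : HilbertSystem P κ)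
    (Γ : Set (RelForm P)) (φ : RelForm P) : Prop :=
  ∃ (δ : Ordinal.{u}) (s : ∀ γ : Ordinal.{u}, γ < δ → RelForm P),
    δ.card < Order.succ κ ∧
    (∀ γ (hγ : γ < δ),
      s γ hγ ∈ H.Axioms ∨ s γ hγ ∈ Γ ∨
      ∃ r ∈ H.Rules, r.2.2 = s γ hγ ∧
        ∀ i : r.1, ∃ γ', ∃ hlt : γ' < γ, s γ' (hlt.trans hγ) = r.2.1 i) ∧
    ∃ γ, ∃ hγ : γ < δ, s γ hγ = φ

/-- The formula `⋁_{p ∈ PROP} (p ∧ ~p)` expressing inconsistency. -/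
def inconsistencyFormula (P : Type u) : RelForm P :=
  .disj P fun p =>
    .conj (ULift.{u} Bool) fun b => bif b.down then .atom p else .neg (.atom p)

/-! In the two-world model `twoPointModel q` (worlds `true` and `false = true*`, `R a b c` the
implication `a → b → c`, only `q` true and only at `true`) every `~p` holds at `true`, so it is an
RM-model inconsistent exactly at `q`. As `PROP` is infinite, finitely many formulas `p ∧ ~p` all
fail in one such model, which satisfies `Γ`; by compactness some model of `Γ`, hence an
inconsistent one, refutes every `p ∧ ~p`, i.e. is consistent. -/

namespace RelForm

variable {P : Type u}

def contra (p : P) : RelForm P :=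
  .conj (ULift.{u} Bool) fun b => bif b.down then .atom p else .neg (.atom p)

theorem contra_injective : Function.Injective (contra (P := P)) := by
  intro p q h
  injection h with _ hf
  simpa using congrFun hf ⟨true⟩

theorem indexBound_contra (p : P) : (contra p).indexBound Cardinal.aleph0.{u} := by
  refine ⟨Cardinal.lt_aleph0_of_finite _, ?_⟩
  rintro ⟨_ | _⟩ <;> trivial

end RelForm

open RelForm

theorem RMModel.sat_contra_iff {P : Type u} (M : RMModel P) (w : M.W) (p : P) :
    M.sat w (contra p) ↔ M.sat w (.atom p) ∧ M.sat w (.neg (.atom p)) :=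
  ⟨fun h => ⟨h ⟨true⟩, h ⟨false⟩⟩, fun ⟨h₁, h₂⟩ => by rintro ⟨_ | _⟩ <;> assumption⟩

theorem inconsistent_iff_exists_sat_contra {P : Type u} (M : RMModel P) (T : M.W) :
    Inconsistent M T ↔ ∃ p, M.sat T (contra p) := by
  simp only [Inconsistent, RMModel.sat_contra_iff]

def twoPointModel {P : Type u} (q : P) : RMModel P where
  W := ULift.{u} Bool
  nonempty := ⟨⟨true⟩⟩
  R a b c := a.down → b.down → c.down
  star a := ⟨!a.down⟩
  V p w := p = q ∧ w.down

theorem twoPointModel_isRMModel {P : Type u} (q : P) :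
    IsRMModel (twoPointModel q) ⟨true⟩ := by
  refine ⟨⟨?_, ?_, ?_, ?_, ?valuation⟩, ?_, ?_, ?_, ?_, ?_⟩
  case valuation =>
    rintro p x y ⟨hpq, hx⟩ hR
    exact ⟨hpq, hR rfl hx⟩
  all_goals simp only [twoPointModel]; decide

theorem twoPointModel_sat_contra_iff {P : Type u} (p q : P) :
    (twoPointModel q).sat ⟨true⟩ (contra p) ↔ p = q := by
  simp [RMModel.sat_contra_iff, RMModel.sat, twoPointModel]

theorem exists_twoPointModel_not_sat_of_subset_range_contra {P : Type u} [Infinite P]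
    (Ψ₀ : Finset (RelForm P)) (hΨ₀ : ↑Ψ₀ ⊆ Set.range (contra (P := P))) :
    ∃ q : P, ∀ ψ ∈ Ψ₀, ¬ (twoPointModel q).sat ⟨true⟩ ψ := by
  obtain ⟨_, ⟨q, rfl⟩, hq⟩ :=
    ((Set.infinite_range_of_injective contra_injective).sdiff Ψ₀.finite_toSet).nonempty
  refine ⟨q, fun ψ hψ hsat => hq ?_⟩
  obtain ⟨p, rfl⟩ := hΨ₀ hψ
  rwa [← (twoPointModel_sat_contra_iff p q).1 hsat]

theorem inconsistency_not_axiomatizable_general {P : Type u} [Infinite P]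
    (VS : ∀ M : RMModel P, M.W → Prop)
    (hRM : ∀ (M : RMModel P) (T : M.W), IsRMModel M T → VS M T)
    (hcompact : ∀ Φ Ψ : Set (RelForm P),
      (∀ φ ∈ Φ, φ.indexBound Cardinal.aleph0.{u}) →
      (∀ ψ ∈ Ψ, ψ.indexBound Cardinal.aleph0.{u}) →
      (∀ (Φ₀ Ψ₀ : Finset (RelForm P)), ↑Φ₀ ⊆ Φ → ↑Ψ₀ ⊆ Ψ →
        ∃ (M : RMModel P) (T : M.W), VS M T ∧
          (∀ φ ∈ Φ₀, M.sat T φ) ∧ (∀ ψ ∈ Ψ₀, ¬ M.sat T ψ)) →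
      ∃ (M : RMModel P) (T : M.W), VS M T ∧
        (∀ φ ∈ Φ, M.sat T φ) ∧ (∀ ψ ∈ Ψ, ¬ M.sat T ψ)) :
    ¬ ∃ Γ : Set (RelForm P),
        (∀ φ ∈ Γ, φ.indexBound Cardinal.aleph0.{u}) ∧
        ∀ (M : RMModel P) (T : M.W), VS M T →
          ((∀ φ ∈ Γ, M.sat T φ) ↔ Inconsistent M T) := by
  rintro ⟨Γ, hΓ, hΓ_iff⟩
  have hfinite : ∀ (Φ₀ Ψ₀ : Finset (RelForm P)), ↑Φ₀ ⊆ Γ → ↑Ψ₀ ⊆ Set.range (contra (P := P)) →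
      ∃ (M : RMModel P) (T : M.W), VS M T ∧
        (∀ φ ∈ Φ₀, M.sat T φ) ∧ (∀ ψ ∈ Ψ₀, ¬ M.sat T ψ) := by
    intro Φ₀ Ψ₀ hΦ₀ hΨ₀
    obtain ⟨q, hq⟩ := exists_twoPointModel_not_sat_of_subset_range_contra Ψ₀ hΨ₀
    have hVS := hRM _ _ (twoPointModel_isRMModel q)
    have hΓq := (hΓ_iff _ _ hVS).2 ((inconsistent_iff_exists_sat_contra _ _).2
      ⟨q, (twoPointModel_sat_contra_iff q q).2 rfl⟩)
    exact ⟨_, _, hVS, fun φ hφ => hΓq φ (hΦ₀ hφ), hq⟩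
  obtain ⟨M, T, hVS, hΓT, hconsistent⟩ := hcompact Γ (Set.range contra) hΓ
    (by rintro _ ⟨p, rfl⟩; exact indexBound_contra p) hfinite
  obtain ⟨p, hp⟩ := (inconsistent_iff_exists_sat_contra M T).1 ((hΓ_iff M T hVS).1 hΓT)
  exact hconsistent _ ⟨p, rfl⟩ hp

/-- If `PROP` is infinite, inconsistency is not a property of
pointed models axiomatizable in the finitary language `L_{ωω}→` with respect to
any class `V_S` lying between the RM-models and the B-models (assuming the
compactness of the finitary language over `V_S`). -/
theorem inconsistency_not_axiomatizable {P : Type u} [Infinite P]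
    (VS : ∀ M : RMModel P, M.W → Prop)
    (hRM : ∀ (M : RMModel P) (T : M.W), IsRMModel M T → VS M T)
    (hB : ∀ (M : RMModel P) (T : M.W), VS M T → IsBModel M T)
    (hcompact : ∀ Φ Ψ : Set (RelForm P),
      (∀ φ ∈ Φ, φ.indexBound Cardinal.aleph0.{u}) →
      (∀ ψ ∈ Ψ, ψ.indexBound Cardinal.aleph0.{u}) →
      (∀ (Φ₀ Ψ₀ : Finset (RelForm P)), ↑Φ₀ ⊆ Φ → ↑Ψ₀ ⊆ Ψ →
        ∃ (M : RMModel P) (T : M.W), VS M T ∧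
          (∀ φ ∈ Φ₀, M.sat T φ) ∧ (∀ ψ ∈ Ψ₀, ¬ M.sat T ψ)) →
      ∃ (M : RMModel P) (T : M.W), VS M T ∧
        (∀ φ ∈ Φ, M.sat T φ) ∧ (∀ ψ ∈ Ψ, ¬ M.sat T ψ)) :
    ¬ ∃ Γ : Set (RelForm P),
        (∀ φ ∈ Γ, φ.indexBound Cardinal.aleph0.{u}) ∧
        ∀ (M : RMModel P) (T : M.W), VS M T →
          ((∀ φ ∈ Γ, M.sat T φ) ↔ Inconsistent M T) :=
  inconsistency_not_axiomatizable_general VS hRM hcompact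
end

section
/- Let κ be an infinite cardinal with |PROP| ≥ κ, and let V_S be any class of pointed Routley–Meyer models with {(M,T) : M an RM-model} ⊆ V_S ⊆ {(M,T) : M a B-model}. If the infinitary relevant language L_{κω}→ is κ-compact with respect to V_S, then κ is a regular limit cardinal. -/
universe u

/-!
A one-world model whose relation is total and whose star is the identity is an RM-model in
which relevant satisfaction of atoms, conjunctions and disjunctions is classical, so
compactness can be refuted by classical valuations.

If `κ` is singular, a set `A` of `κ` atoms is the union of fewer than `κ` pieces `B i` of size
`< κ`. Then `{p_a | a ∈ A}` together with the denial of `⋀ᵢ ⋀_{a ∈ B i} p_a` is not satisfiable,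
although every part of size `< κ` is: it misses some atom `p_{a₀}`, and the valuation refuting
exactly `p_{a₀}` refutes the conjunction.

If `κ = μ⁺`, assert `⋁_{β < μ} p_{αβ}` for every `α < κ` and deny `p_{αβ} ∧ p_{α'β}` for
`α ≠ α'`: a model of all of this would yield an injection `κ → μ`, while fewer than `κ` of the
`α`s inject into `μ`, and the graph of that injection is a valuation satisfying the part.
-/

open Cardinal Set

theorem Cardinal.exists_small_cover_of_not_isRegular {κ : Cardinal.{u}} (hκ : ℵ₀ ≤ κ)
    (h : ¬ κ.IsRegular) : ∃ (A ι : Type u) (B : ι → Set A),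
      #A = κ ∧ ⋃ i, B i = Set.univ ∧ #ι < κ ∧ ∀ i, #(B i) < κ := by
  have hA : #κ.ord.ToType = κ := by rw [mk_toType, card_ord]
  obtain ⟨S, hS, hScard⟩ := Order.exists_cof_eq κ.ord.ToType
  refine ⟨κ.ord.ToType, S, fun s => Iic s.1, hA, ?_, ?_, fun s => ?_⟩
  · refine eq_univ_of_forall fun x => ?_
    obtain ⟨s, hs, hxs⟩ := hS x
    exact mem_iUnion.2 ⟨⟨s, hs⟩, hxs⟩
  · rw [hScard, Ordinal.cof_toType]
    exact lt_of_not_ge fun hle => h ⟨hκ, hle⟩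
  · have hIic := mk_Iic_lt s.1 (by rw [hA, Ordinal.type_toType]) (hA.symm ▸ hκ)
    rwa [hA] at hIic

theorem Cardinal.exists_mk_lt_subset_image {α : Type u} {β : Type v} {κ : Cardinal.{u}}
    {g : α → β} {s : Set β} (hs : s ⊆ range g) (hsκ : lift.{u} #s < lift.{v} κ) :
    ∃ t : Set α, #t < κ ∧ s ⊆ g '' t := by
  choose f hf using fun x : s => hs x.2
  refine ⟨range f, ?_, fun x hx => ⟨f ⟨x, hx⟩, mem_range_self _, hf ⟨x, hx⟩⟩⟩
  exact lift_lt.1 (mk_range_le_lift.trans_lt hsκ)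

namespace RMModel

variable {P : Type u}

def ofValuation (v : P → Prop) : RMModel P where
  W := PUnit
  nonempty := ⟨⟨⟩⟩
  R _ _ _ := True
  star := id
  V p _ := v p

theorem isRMModel_ofValuation (v : P → Prop) : IsRMModel (ofValuation v) PUnit.unit :=
  ⟨⟨fun _ => trivial, fun _ _ _ _ _ _ => trivial, fun _ => rfl,
    fun _ _ _ => trivial, fun _ _ _ hv _ => hv⟩,
    fun _ _ _ _ => trivial, fun _ _ _ _ _ => ⟨⟨⟩, trivial, trivial⟩,
    fun _ => trivial, fun _ _ _ _ => trivial, fun _ _ _ _ => Or.inl trivial⟩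

end RMModel

namespace RelForm

variable {P : Type u}

def and (φ ψ : RelForm P) : RelForm P :=
  .conj (ULift Bool) fun b => bif b.down then φ else ψ

@[simp]
theorem sat_and (M : RMModel P) (w : M.W) (φ ψ : RelForm P) :
    M.sat w (φ.and ψ) ↔ M.sat w φ ∧ M.sat w ψ := by
  simp [and, RMModel.sat, ULift.forall, Bool.forall_bool, and_comm]

theorem indexBound_and {κ : Cardinal.{u}} (hκ : 2 < κ) {φ ψ : RelForm P}
    (hφ : φ.indexBound κ) (hψ : ψ.indexBound κ) : (φ.and ψ).indexBound κ :=
  ⟨by simpa using hκ, fun ⟨b⟩ => by cases b <;> assumption⟩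

def HasModelIn (VS : ∀ M : RMModel P, M.W → Prop) (Φ Ψ : Set (RelForm P)) : Prop :=
  ∃ (M : RMModel P) (T : M.W), VS M T ∧ (∀ φ ∈ Φ, M.sat T φ) ∧ ∀ ψ ∈ Ψ, ¬ M.sat T ψ

theorem hasModelIn_ofValuation {VS : ∀ M : RMModel P, M.W → Prop}
    (hRM : ∀ (M : RMModel P) (T : M.W), IsRMModel M T → VS M T) (v : P → Prop)
    {Φ Ψ : Set (RelForm P)} (hΦ : ∀ φ ∈ Φ, (RMModel.ofValuation v).sat ⟨⟩ φ)
    (hΨ : ∀ ψ ∈ Ψ, ¬ (RMModel.ofValuation v).sat ⟨⟩ ψ) : HasModelIn VS Φ Ψ :=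
  ⟨_, _, hRM _ _ (RMModel.isRMModel_ofValuation v), hΦ, hΨ⟩

/-- `L_{κω}→` is `θ`-compact with respect to `VS`. -/
def IsCompactWrt (κ θ : Cardinal.{u}) (VS : ∀ M : RMModel P, M.W → Prop) : Prop :=
  ∀ Φ Ψ : Set (RelForm P), (∀ φ ∈ Φ, φ.indexBound κ) → (∀ ψ ∈ Ψ, ψ.indexBound κ) →
    (∀ Φ₀ Ψ₀ : Set (RelForm P), Φ₀ ⊆ Φ → Ψ₀ ⊆ Ψ → #Φ₀ < lift.{u + 1} θ →
      #Ψ₀ < lift.{u + 1} θ → HasModelIn VS Φ₀ Ψ₀) →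
    HasModelIn VS Φ Ψ

end RelForm

namespace RelForm.IsCompactWrt

variable {P : Type u} {κ : Cardinal.{u}} {VS : ∀ M : RMModel P, M.W → Prop}

theorem mk_lt_of_iUnion_eq_univ (hc : IsCompactWrt κ κ VS)
    (hRM : ∀ (M : RMModel P) (T : M.W), IsRMModel M T → VS M T) {A ι : Type u} (e : A ↪ P)
    (B : ι → Set A) (hB : ⋃ i, B i = Set.univ) (hι : #ι < κ) (hBκ : ∀ i, #(B i) < κ) :
    #A < κ := by
  by_contra! hA
  let χ : RelForm P := .conj ι fun i => .conj (B i) fun a => .atom (e a)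
  obtain ⟨M, T, -, hΦ, hΨ⟩ := hc (range fun a => .atom (e a)) {χ}
    (by rintro _ ⟨a, rfl⟩; trivial)
    (by rintro _ rfl; exact ⟨hι, fun i => ⟨hBκ i, fun _ => trivial⟩⟩)
    (by
      intro Φ₀ Ψ₀ hΦ₀ hΨ₀ hΦ₀κ _
      obtain ⟨s, hsκ, hs⟩ := exists_mk_lt_subset_image hΦ₀ (by rwa [lift_id'.{u, u + 1}])
      obtain ⟨a₀, ha₀⟩ : ∃ a₀, a₀ ∉ s := by
        by_contra! hs_univ
        exact (hsκ.trans_le hA).ne (by rw [eq_univ_of_forall hs_univ, mk_univ])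
      refine hasModelIn_ofValuation hRM (· ≠ e a₀) ?_ ?_
      · intro φ hφ
        obtain ⟨a, ha, rfl⟩ := hs hφ
        exact e.injective.ne (ne_of_mem_of_not_mem ha ha₀)
      · intro ψ hψ hχ
        cases hΨ₀ hψ
        obtain ⟨i, hi⟩ := mem_iUnion.1 (hB ▸ mem_univ a₀)
        exact hχ i ⟨a₀, hi⟩ rfl)
  exact hΨ χ rfl fun i a => hΦ _ ⟨a, rfl⟩

theorem mk_le_of_forall_mk_lt_le (hc : IsCompactWrt κ κ VS)
    (hRM : ∀ (M : RMModel P) (T : M.W), IsRMModel M T → VS M T) (hκ : 2 < κ) {X Y : Type u}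
    (e : X × Y ↪ P) (hY : #Y < κ) (hsmall : ∀ s : Set X, #s < κ → #s ≤ #Y) : #X ≤ #Y := by
  let p : X → Y → RelForm P := fun x y => .atom (e (x, y))
  obtain ⟨M, T, -, hΦ, hΨ⟩ := hc (range fun x => .disj Y (p x))
    {ψ | ∃ x x' y, x ≠ x' ∧ ψ = (p x y).and (p x' y)}
    (by rintro _ ⟨x, rfl⟩; exact ⟨hY, fun _ => trivial⟩)
    (by rintro _ ⟨x, x', y, -, rfl⟩; exact indexBound_and hκ trivial trivial)
    (by
      intro Φ₀ Ψ₀ hΦ₀ hΨ₀ hΦ₀κ _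
      obtain ⟨s, hsκ, hs⟩ := exists_mk_lt_subset_image hΦ₀ (by rwa [lift_id'.{u, u + 1}])
      obtain ⟨c⟩ : Nonempty (s ↪ Y) := hsmall s hsκ
      refine hasModelIn_ofValuation hRM (fun q => ∃ x : s, q = e (x, c x)) ?_ ?_
      · intro φ hφ
        obtain ⟨x, hx, rfl⟩ := hs hφ
        exact ⟨c ⟨x, hx⟩, ⟨x, hx⟩, rfl⟩
      · intro ψ hψ hpair
        obtain ⟨x, x', y, hne, rfl⟩ := hΨ₀ hψ
        obtain ⟨⟨a, ha⟩, ⟨a', ha'⟩⟩ := (sat_and _ _ _ _).1 hpair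
        simp only [Prod.ext_iff, e.injective.eq_iff] at ha ha'
        exact hne (by rw [ha.1, ha'.1, c.injective (ha.2.symm.trans ha'.2)]))
  choose f hf using fun x => hΦ _ ⟨x, rfl⟩
  refine mk_le_of_injective (f := f) fun x x' hxx' => by_contra fun hne => ?_
  exact hΨ _ ⟨x, x', f x, hne, rfl⟩ ((sat_and _ _ _ _).2 ⟨hf x, hxx' ▸ hf x'⟩)

end RelForm.IsCompactWrt

theorem kappa_compact_implies_regular_limit_general {P : Type u} (κ : Cardinal.{u})
    (hκ : Cardinal.aleph0.{u} ≤ κ) (hP : κ ≤ Cardinal.mk P)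
    (VS : ∀ M : RMModel P, M.W → Prop)
    (hRM : ∀ (M : RMModel P) (T : M.W), IsRMModel M T → VS M T)
    (hcompact : ∀ Φ Ψ : Set (RelForm P),
      (∀ φ ∈ Φ, φ.indexBound κ) → (∀ ψ ∈ Ψ, ψ.indexBound κ) →
      (∀ Φ₀ Ψ₀ : Set (RelForm P), Φ₀ ⊆ Φ → Ψ₀ ⊆ Ψ →
        Cardinal.mk Φ₀ < Cardinal.lift.{u + 1} κ →
        Cardinal.mk Ψ₀ < Cardinal.lift.{u + 1} κ →
        ∃ (M : RMModel P) (T : M.W), VS M T ∧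
          (∀ φ ∈ Φ₀, M.sat T φ) ∧ (∀ ψ ∈ Ψ₀, ¬ M.sat T ψ)) →
      ∃ (M : RMModel P) (T : M.W), VS M T ∧
        (∀ φ ∈ Φ, M.sat T φ) ∧ (∀ ψ ∈ Ψ, ¬ M.sat T ψ)) :
    κ.IsRegular ∧ ∀ μ : Cardinal.{u}, μ < κ → Order.succ μ < κ := by
  have hc : RelForm.IsCompactWrt κ κ VS := hcompact
  refine ⟨by_contra fun hreg => ?_, fun μ hμ => lt_of_not_ge fun hle => ?_⟩
  · obtain ⟨A, ι, B, hA, hB, hι, hBκ⟩ := exists_small_cover_of_not_isRegular hκ hreg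
    obtain ⟨e⟩ : Nonempty (A ↪ P) := hA.trans_le hP
    exact (hc.mk_lt_of_iUnion_eq_univ hRM e B hB hι hBκ).ne hA
  · have hsucc : κ = Order.succ μ := le_antisymm hle (Order.succ_le_of_lt hμ)
    obtain ⟨e⟩ : Nonempty (κ.out × μ.out ↪ P) := by
      rw [← le_def, mk_prod, lift_id, lift_id, mk_out, mk_out]
      exact ((mul_le_mul_right hμ.le κ).trans (mul_eq_self hκ).le).trans hP
    have hXY := hc.mk_le_of_forall_mk_lt_le hRM ((natCast_lt_aleph0 (n := 2)).trans_le hκ) e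
      (by rwa [mk_out]) fun s hs => by rw [mk_out]; exact Order.lt_succ_iff.1 (hsucc ▸ hs)
    rw [mk_out, mk_out] at hXY
    exact hμ.not_ge hXY

/-- Let `κ` be an infinite cardinal with `|PROP| ≥ κ` and let
`V_S` lie between the RM-models and the B-models.  If `L_{κω}→` is `κ`-compact
with respect to `V_S`, then `κ` is a regular limit cardinal. -/
theorem kappa_compact_implies_regular_limit {P : Type u} (κ : Cardinal.{u})
    (hκ : Cardinal.aleph0.{u} ≤ κ) (hP : κ ≤ Cardinal.mk P)
    (VS : ∀ M : RMModel P, M.W → Prop)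
    (hRM : ∀ (M : RMModel P) (T : M.W), IsRMModel M T → VS M T)
    (hB : ∀ (M : RMModel P) (T : M.W), VS M T → IsBModel M T)
    (hcompact : ∀ Φ Ψ : Set (RelForm P),
      (∀ φ ∈ Φ, φ.indexBound κ) → (∀ ψ ∈ Ψ, ψ.indexBound κ) →
      (∀ Φ₀ Ψ₀ : Set (RelForm P), Φ₀ ⊆ Φ → Ψ₀ ⊆ Ψ →
        Cardinal.mk Φ₀ < Cardinal.lift.{u + 1} κ →
        Cardinal.mk Ψ₀ < Cardinal.lift.{u + 1} κ →
        ∃ (M : RMModel P) (T : M.W), VS M T ∧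
          (∀ φ ∈ Φ₀, M.sat T φ) ∧ (∀ ψ ∈ Ψ₀, ¬ M.sat T ψ)) →
      ∃ (M : RMModel P) (T : M.W), VS M T ∧
        (∀ φ ∈ Φ, M.sat T φ) ∧ (∀ ψ ∈ Ψ, ¬ M.sat T ψ)) :
    κ.IsRegular ∧ ∀ μ : Cardinal.{u}, μ < κ → Order.succ μ < κ :=
  kappa_compact_implies_regular_limit_general κ hκ hP VS hRM hcompact
end

section
/- Let κ be an infinite cardinal and |PROP| ≥ κ⁺, and let V_S be any class of pointed Routley–Meyer models with {(M,T) : M an RM-model} ⊆ V_S ⊆ {(M,T) : M a B-model}. Then every Hilbert-style formal system H for L_{κ⁺ω}→ that is sound with respect to V_S fails to be strongly complete: there is a set Δ of formulas of L_{κ⁺ω}→ such that Δ semantically implies ⊥ over V_S (Δ has no model in V_S) but Δ ⊬_H ⊥. -/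
universe u

namespace NSCaux

/-- The disjunction `⋁_{i ∈ K} p_{a,i}`. -/
def sigmaF {P A K : Type u} (e : A × K → P) (a : A) : RelForm P :=
  .disj K fun i => .atom (e (a, i))

/-- The formula `(p_{a,i} ∧ p_{b,i}) → ⊥`. -/
def dF {P A K : Type u} (e : A × K → P) (a b : A) (i : K) : RelForm P :=
  .imp (.conj (ULift.{u} Bool) fun c =>
    bif c.down then .atom (e (a, i)) else .atom (e (b, i))) .bot

/-- The unsatisfiable set encoding an injection of `A` into `K`. -/
def DeltaF {P A K : Type u} (e : A × K → P) : Set (RelForm P) :=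
  {φ | (∃ a, φ = sigmaF e a) ∨ ∃ a b i, a ≠ b ∧ φ = dF e a b i}

/-- The one-world Routley-Meyer model with total `R` and identity star. -/
def oneModel {P : Type u} (V : P → Prop) : RMModel P :=
  { W := PUnit, nonempty := ⟨⟨⟩⟩, R := fun _ _ _ => True, star := id,
    V := fun p _ => V p }

lemma oneModel_isRM {P : Type u} (V : P → Prop) :
    IsRMModel (oneModel V) ⟨⟩ :=
  ⟨⟨fun _ => trivial, fun _ _ _ _ _ _ => trivial, fun _ => rfl,
    fun _ _ _ => trivial, fun _ _ _ h _ => h⟩,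
   fun _ _ _ _ => trivial, fun _ _ _ v _ => ⟨⟨⟩, trivial, trivial⟩,
   fun _ => trivial, fun _ _ _ _ => trivial, fun _ _ _ _ => Or.inl trivial⟩

end NSCaux

/-- Let `κ` be infinite with `|PROP| ≥ κ⁺` and let `V_S` lie
between the RM-models and the B-models.  Every Hilbert-style formal system for
`L_{κ⁺ω}→` that is sound with respect to `V_S` fails to be strongly complete:
some set `Δ` of `L_{κ⁺ω}→`-formulas semantically implies `⊥` over `V_S`, yet
`Δ ⊬_H ⊥`. -/
theorem no_strong_completeness {P : Type u} (κ : Cardinal.{u})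
    (hκ : Cardinal.aleph0.{u} ≤ κ) (hP : Order.succ κ ≤ Cardinal.mk P)
    (VS : ∀ M : RMModel P, M.W → Prop)
    (hRM : ∀ (M : RMModel P) (T : M.W), IsRMModel M T → VS M T)
    (hB : ∀ (M : RMModel P) (T : M.W), VS M T → IsBModel M T)
    (H : HilbertSystem P κ)
    (hsound : ∀ (Γ : Set (RelForm P)) (φ : RelForm P),
      (∀ ψ ∈ Γ, ψ.indexBound (Order.succ κ)) → φ.indexBound (Order.succ κ) →
      H.Proves Γ φ →
      ∀ (M : RMModel P) (T : M.W), VS M T →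
        (∀ ψ ∈ Γ, M.sat T ψ) → M.sat T φ) :
    ∃ Δ : Set (RelForm P),
      (∀ φ ∈ Δ, φ.indexBound (Order.succ κ)) ∧
      (∀ (M : RMModel P) (T : M.W), VS M T →
        (∀ φ ∈ Δ, M.sat T φ) → M.sat T RelForm.bot) ∧
      ¬ H.Proves Δ RelForm.bot  := by
  classical
  have hκκ : κ < Order.succ κ := Order.lt_succ κ
  have hκ' : Cardinal.aleph0.{u} ≤ Order.succ κ := hκ.trans hκκ.le
  set A : Type u := (Order.succ κ).out with hAdef
  set K : Type u := Quotient.out κ with hKdef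
  have hA : Cardinal.mk A = Order.succ κ := Cardinal.mk_out _
  have hK : Cardinal.mk K = κ := Cardinal.mk_out _
  have hKne : Nonempty K := by
    rw [← Cardinal.mk_ne_zero_iff, hK]
    exact (Cardinal.aleph0_pos.trans_le hκ).ne'
  -- an injection of `A × K` into the propositional variables
  have hcard : Cardinal.mk (A × K) ≤ Cardinal.mk P := by
    have : Cardinal.mk (A × K) = Order.succ κ := by
      rw [Cardinal.mk_prod, Cardinal.lift_id, Cardinal.lift_id, hA, hK,
        Cardinal.mul_eq_max hκ' hκ, max_eq_left hκκ.le]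
    rw [this]; exact hP
  obtain ⟨e⟩ := (Cardinal.le_def _ _).mp hcard
  refine ⟨NSCaux.DeltaF e, ?_, ?_, ?_⟩
  · -- index bounds
    rintro φ (⟨a, rfl⟩ | ⟨a, b, i, hab, rfl⟩)
    · exact ⟨hK.le.trans_lt hκκ, fun _ => trivial⟩
    · refine ⟨⟨?_, fun c => by cases c with | up c => cases c <;> trivial⟩, trivial⟩
      exact (Cardinal.lt_aleph0_of_finite _).trans_le hκ'
  · -- ∆ is unsatisfiable over V_S
    intro M T hVS hsat
    have hRT : ∀ x, M.R T x x := (hB M T hVS).1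
    have hf : ∀ a : A, ∃ i : K, M.V (e (a, i)) T := by
      intro a
      exact hsat (NSCaux.sigmaF e a) (Or.inl ⟨a, rfl⟩)
    choose f hfv using hf
    have hinj : Function.Injective f := by
      intro a b hab
      by_contra hne
      have hd := hsat (NSCaux.dF e a b (f a)) (Or.inr ⟨a, b, f a, hne, rfl⟩)
      refine hd T T (hRT T) ?_
      intro c
      cases c with
      | up c =>
        cases c
        · show M.V (e (b, f a)) T
          rw [hab]; exact hfv b
        · exact hfv a
    have : Order.succ κ ≤ κ := by
      rw [← hA, ← hK]; exact Cardinal.mk_le_of_injective hinj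
    exact absurd this hκκ.not_ge
  · -- ∆ does not prove ⊥
    rintro ⟨δ, s, hδ, hmem, hlast⟩
    set Δ₀ : Set (RelForm P) :=
      {φ | φ ∈ NSCaux.DeltaF e ∧ ∃ γ, ∃ hγ : γ < δ, s γ hγ = φ} with hΔ₀def
    have hproves : H.Proves Δ₀ RelForm.bot := by
      refine ⟨δ, s, hδ, ?_, hlast⟩
      intro γ hγ
      rcases hmem γ hγ with h | h | h
      · exact Or.inl h
      · exact Or.inr (Or.inl ⟨h, γ, hγ, rfl⟩)
      · exact Or.inr (Or.inr h)
    -- the set of `a` whose disjunction is used in the proof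
    set A₀ : Set A := {a | NSCaux.sigmaF e a ∈ Δ₀} with hA₀def
    have hσinj : Function.Injective (NSCaux.sigmaF (P := P) e) := by
      intro a b h
      simp only [NSCaux.sigmaF, RelForm.disj.injEq, heq_eq_eq, true_and] at h
      obtain ⟨i₀⟩ := hKne
      have h2 := congrFun h i₀
      simp only [RelForm.atom.injEq] at h2
      exact (Prod.mk.injEq _ _ _ _ ▸ congrArg id (e.injective h2)).1
    have hA₀card : Cardinal.mk A₀ ≤ κ := by
      have hemb : Nonempty (A₀ ↪ Set.Iio δ) := by
        have pick : ∀ a : A₀, ∃ γ : Set.Iio δ, s γ.1 γ.2 = NSCaux.sigmaF e a.1 := by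
          rintro ⟨a, -, γ, hγ, hs⟩
          exact ⟨⟨γ, hγ⟩, hs⟩
        choose t ht using pick
        refine ⟨t, fun a b hab => ?_⟩
        have : NSCaux.sigmaF e a.1 = NSCaux.sigmaF e b.1 := by
          rw [← ht a, ← ht b, hab]
        exact Subtype.ext (hσinj this)
      have := (Cardinal.lift_mk_le'.mpr hemb)
      rw [Ordinal.mk_Iio_ordinal, Cardinal.lift_lift] at this
      have h3 : Cardinal.mk A₀ ≤ δ.card := by
        exact_mod_cast Cardinal.lift_le.mp this
      exact h3.trans (Order.lt_succ_iff.mp hδ)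
    obtain ⟨g⟩ := (Cardinal.le_def _ _).mp (le_of_le_of_eq hA₀card hK.symm)
    -- the one-world countermodel
    set V₀ : P → Prop := fun p => ∃ a : A₀, p = e (a.1, g a) with hV₀def
    set M₀ : RMModel P := NSCaux.oneModel V₀ with hM₀def
    have hsat₀ : ∀ ψ ∈ Δ₀, M₀.sat ⟨⟩ ψ := by
      rintro ψ ⟨(⟨a, rfl⟩ | ⟨a, b, i, hab, rfl⟩), hin⟩
      · have ha : a ∈ A₀ := ⟨Or.inl ⟨a, rfl⟩, hin⟩
        exact ⟨g ⟨a, ha⟩, ⟨⟨a, ha⟩, rfl⟩⟩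
      · intro x y _ hc
        have h1 : V₀ (e (a, i)) := hc ⟨true⟩
        have h2 : V₀ (e (b, i)) := hc ⟨false⟩
        obtain ⟨a', ha'⟩ := h1
        obtain ⟨b', hb'⟩ := h2
        obtain ⟨haa, hia⟩ := Prod.mk.injEq _ _ _ _ ▸ e.injective ha'
        obtain ⟨hbb, hib⟩ := Prod.mk.injEq _ _ _ _ ▸ e.injective hb'
        apply hab
        rw [haa, hbb]
        exact congrArg (fun z => z.1) (g.injective (hia.symm.trans hib))
    have hbound : ∀ ψ ∈ Δ₀, ψ.indexBound (Order.succ κ) := by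
      rintro ψ ⟨(⟨a, rfl⟩ | ⟨a, b, i, hab, rfl⟩), -⟩
      · exact ⟨hK.le.trans_lt hκκ, fun _ => trivial⟩
      · refine ⟨⟨?_, fun c => by cases c with | up c => cases c <;> trivial⟩, trivial⟩
        exact (Cardinal.lt_aleph0_of_finite _).trans_le hκ'
    exact hsound Δ₀ RelForm.bot hbound trivial hproves M₀ ⟨⟩
      (hRM M₀ ⟨⟩ (NSCaux.oneModel_isRM V₀)) hsat₀
end

section
/- For each ordinal α, there are only set-many non-equivalent formulas of L_{∞ω}→ with degree ≤ α: there exists a set S of formulas of L_{∞ω}→ such that every formula of L_{∞ω}→ of degree ≤ α is equivalent to some member of S, where two formulas φ and ψ are equivalent if for every Routley–Meyer model M and every world w, M,w ⊩ φ iff M,w ⊩ ψ. -/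
universe u

/-! ### Auxiliary machinery for Statement 4 -/

/-- Semantic equivalence of relevant formulas. -/
def REquiv {P : Type u} (φ ψ : RelForm P) : Prop :=
  ∀ (M : RMModel P) (w : M.W), M.sat w φ ↔ M.sat w ψ

/-- Formulas generated by `⋀, ⋁, ~` from atoms, `⊥`, and implications between
members of `U`. -/
inductive Gen {P : Type u} (U : Set (RelForm P)) : RelForm P → Prop
  | atom (p : P) : Gen U (.atom p)
  | bot : Gen U .bot
  | neg {φ} : Gen U φ → Gen U (.neg φ)
  | conj (ι : Type u) (f : ι → RelForm P) : (∀ i, Gen U (f i)) → Gen U (.conj ι f)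
  | disj (ι : Type u) (f : ι → RelForm P) : (∀ i, Gen U (f i)) → Gen U (.disj ι f)
  | imp {φ ψ} : φ ∈ U → ψ ∈ U → Gen U (.imp φ ψ)

/-- The extended trace of a pointed model: truth values of atoms and of
implications between members of `U` along the star-orbit of `w`. -/
def extTrace {P : Type u} (U : Set (RelForm P)) (M : RMModel P) (w : M.W) :
    (ℕ → P → Prop) × (ℕ → U → U → Prop) :=
  ⟨fun n p => M.V p (M.star^[n] w),
   fun n φ ψ => M.sat (M.star^[n] w) (.imp φ.1 ψ.1)⟩

lemma gen_determined {P : Type u} {U : Set (RelForm P)} {φ : RelForm P}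
    (h : Gen U φ) {M₁ M₂ : RMModel P} {w₁ : M₁.W} {w₂ : M₂.W}
    (he : extTrace U M₁ w₁ = extTrace U M₂ w₂) :
    ∀ n, M₁.sat (M₁.star^[n] w₁) φ ↔ M₂.sat (M₂.star^[n] w₂) φ := by
  have h1 : ∀ n p, M₁.V p (M₁.star^[n] w₁) = M₂.V p (M₂.star^[n] w₂) :=
    fun n p => congrFun (congrFun (congrArg Prod.fst he) n) p
  have h2 : ∀ n (φ ψ : U),
      M₁.sat (M₁.star^[n] w₁) (.imp φ.1 ψ.1) = M₂.sat (M₂.star^[n] w₂) (.imp φ.1 ψ.1) :=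
    fun n φ ψ => congrFun (congrFun (congrFun (congrArg Prod.snd he) n) φ) ψ
  induction h with
  | atom p => intro n; exact (h1 n p).to_iff
  | bot => intro n; simp [RMModel.sat]
  | neg hφ ih =>
      intro n
      show ¬ M₁.sat (M₁.star (M₁.star^[n] w₁)) _ ↔ ¬ M₂.sat (M₂.star (M₂.star^[n] w₂)) _
      rw [← Function.iterate_succ_apply' M₁.star, ← Function.iterate_succ_apply' M₂.star]
      exact not_congr (ih (n + 1))
  | conj ι f hf ih =>
      intro n
      show (∀ i, M₁.sat _ (f i)) ↔ (∀ i, M₂.sat _ (f i))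
      exact forall_congr' fun i => ih i n
  | disj ι f hf ih =>
      intro n
      show (∃ i, M₁.sat _ (f i)) ↔ (∃ i, M₂.sat _ (f i))
      exact exists_congr fun i => ih i n
  | @imp φ ψ hφ hψ => intro n; exact (h2 n ⟨φ, hφ⟩ ⟨ψ, hψ⟩).to_iff

/-- Replace each implication subformula by an implication between chosen
representatives. -/
def normalizeRel {P : Type u} (rep : RelForm P → RelForm P) : RelForm P → RelForm P
  | .atom p => .atom p
  | .bot => .bot
  | .neg φ => .neg (normalizeRel rep φ)
  | .conj ι f => .conj ι fun i => normalizeRel rep (f i)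
  | .disj ι f => .disj ι fun i => normalizeRel rep (f i)
  | .imp φ ψ => .imp (rep φ) (rep ψ)

lemma deg_lt_of_imp_deg_le {P : Type u} {φ ψ : RelForm P} {α : Ordinal.{u}}
    (h : (RelForm.imp φ ψ).deg ≤ α) : φ.deg < α ∧ ψ.deg < α := by
  have hm : max φ.deg ψ.deg < α := by
    refine lt_of_lt_of_le ?_ h
    show max φ.deg ψ.deg < max φ.deg ψ.deg + 1
    rw [Ordinal.add_one_eq_succ]
    exact Order.lt_succ _
  exact ⟨lt_of_le_of_lt (le_max_left _ _) hm, lt_of_le_of_lt (le_max_right _ _) hm⟩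

lemma gen_normalizeRel {P : Type u} {U : Set (RelForm P)} {α : Ordinal.{u}}
    {rep : RelForm P → RelForm P} (hrep : ∀ χ : RelForm P, χ.deg < α → rep χ ∈ U) :
    ∀ φ : RelForm P, φ.deg ≤ α → Gen U (normalizeRel rep φ) := by
  intro φ
  induction φ with
  | atom p => intro _; exact Gen.atom p
  | bot => intro _; exact Gen.bot
  | neg φ ih => intro h; exact Gen.neg (ih h)
  | conj ι f ih =>
      intro h
      exact Gen.conj _ _ fun i => ih i (le_trans (le_ciSup (Ordinal.bddAbove_range _) i) h)
  | disj ι f ih =>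
      intro h
      exact Gen.disj _ _ fun i => ih i (le_trans (le_ciSup (Ordinal.bddAbove_range _) i) h)
  | imp φ ψ _ _ =>
      intro h
      obtain ⟨h1, h2⟩ := deg_lt_of_imp_deg_le h
      exact Gen.imp (hrep φ h1) (hrep ψ h2)

lemma requiv_normalizeRel {P : Type u} {α : Ordinal.{u}}
    {rep : RelForm P → RelForm P} (hrep : ∀ χ : RelForm P, χ.deg < α → REquiv χ (rep χ)) :
    ∀ φ : RelForm P, φ.deg ≤ α → REquiv φ (normalizeRel rep φ) := by
  intro φ
  induction φ with
  | atom p => intro _ M w; rfl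
  | bot => intro _ M w; rfl
  | neg φ ih =>
      intro h M w
      exact not_congr (ih h M (M.star w))
  | conj ι f ih =>
      intro h M w
      exact forall_congr' fun i =>
        ih i (le_trans (le_ciSup (Ordinal.bddAbove_range _) i) h) M w
  | disj ι f ih =>
      intro h M w
      exact exists_congr fun i =>
        ih i (le_trans (le_ciSup (Ordinal.bddAbove_range _) i) h) M w
  | imp φ ψ _ _ =>
      intro h M w
      obtain ⟨h1, h2⟩ := deg_lt_of_imp_deg_le h
      show (∀ a b, M.R w a b → M.sat a φ → M.sat b ψ) ↔
        (∀ a b, M.R w a b → M.sat a (rep φ) → M.sat b (rep ψ))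
      exact forall_congr' fun a => forall_congr' fun b => imp_congr Iff.rfl
        (imp_congr (hrep φ h1 M a) (hrep ψ h2 M b))

/-- For each ordinal `α` there are only set-many non-equivalent
formulas of `L_{∞ω}→` of degree `≤ α`: there is a (small) set `S` of formulas
such that every formula of degree `≤ α` is equivalent to a member of `S`. -/
theorem setMany_formulas_of_degree_le {P : Type u} (α : Ordinal.{u}) :
    ∃ S : Set (RelForm P), Small.{u} S ∧
      ∀ φ : RelForm P, φ.deg ≤ α →
        ∃ ψ ∈ S, ∀ (M : RMModel P) (w : M.W), M.sat w φ ↔ M.sat w ψ := by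
  classical
  induction α using Ordinal.induction with
  | h α IH =>
  choose Sf hSf using IH
  set U : Set (RelForm P) := ⋃ β : Set.Iio α, Sf β.1 β.2 with hU
  have hUsmall : Small.{u} U := by
    have : ∀ β : Set.Iio α, Small.{u} (Sf β.1 β.2) := fun β => (hSf β.1 β.2).1
    exact small_iUnion _
  -- representative function into U for formulas of degree < α
  set rep : RelForm P → RelForm P := fun χ =>
    if h : ∃ ψ ∈ U, REquiv χ ψ then h.choose else χ with hrepdef
  have hrep : ∀ χ : RelForm P, χ.deg < α → rep χ ∈ U ∧ REquiv χ (rep χ) := by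
    intro χ hχ
    obtain ⟨ψ, hψS, hψe⟩ := (hSf χ.deg hχ).2 χ le_rfl
    have hex : ∃ ψ ∈ U, REquiv χ ψ :=
      ⟨ψ, Set.mem_iUnion.2 ⟨⟨χ.deg, hχ⟩, hψS⟩, hψe⟩
    have : rep χ = hex.choose := by simp [hrepdef, hex]
    rw [this]
    exact ⟨hex.choose_spec.1, hex.choose_spec.2⟩
  -- traces
  haveI : Small.{u} (Set ((ℕ → P → Prop) × (ℕ → U → U → Prop))) := by infer_instance
  set val : RelForm P → Set ((ℕ → P → Prop) × (ℕ → U → U → Prop)) := fun ψ =>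
    {e | ∃ (M : RMModel P) (w : M.W), extTrace U M w = e ∧ M.sat w ψ} with hval
  have val_eq_requiv : ∀ ψ₁ ψ₂ : RelForm P, Gen U ψ₁ → Gen U ψ₂ → val ψ₁ = val ψ₂ →
      REquiv ψ₁ ψ₂ := by
    have key : ∀ ψ₁ ψ₂ : RelForm P, Gen U ψ₂ → val ψ₁ ⊆ val ψ₂ →
        ∀ (M : RMModel P) (w : M.W), M.sat w ψ₁ → M.sat w ψ₂ := by
      intro ψ₁ ψ₂ hg₂ hsub M w hw
      have : extTrace U M w ∈ val ψ₁ := ⟨M, w, rfl, hw⟩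
      obtain ⟨M', w', he, hw'⟩ := hsub this
      have := gen_determined hg₂ he.symm 0
      simpa using this.mpr (by simpa using hw')
    intro ψ₁ ψ₂ h₁ h₂ he M w
    exact ⟨key ψ₁ ψ₂ h₂ he.le M w, key ψ₂ ψ₁ h₁ he.ge M w⟩
  -- the set of representatives
  set pick : Set ((ℕ → P → Prop) × (ℕ → U → U → Prop)) → RelForm P := fun v =>
    if h : ∃ ψ, Gen U ψ ∧ val ψ = v then h.choose else .bot with hpickdef
  refine ⟨Set.range pick, small_range pick, ?_⟩
  intro φ hφ
  set φ' := normalizeRel rep φ with hφ'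
  have hgen : Gen U φ' := gen_normalizeRel (fun χ h => (hrep χ h).1) φ hφ
  have hequiv : REquiv φ φ' := requiv_normalizeRel (fun χ h => (hrep χ h).2) φ hφ
  have hex : ∃ ψ, Gen U ψ ∧ val ψ = val φ' := ⟨φ', hgen, rfl⟩
  have hpick : pick (val φ') = hex.choose := by simp [hpickdef, hex]
  refine ⟨pick (val φ'), ⟨val φ', rfl⟩, ?_⟩
  intro M w
  have h2 : REquiv φ' (pick (val φ')) := by
    rw [hpick]
    exact val_eq_requiv φ' hex.choose hgen hex.choose_spec.1 hex.choose_spec.2.symm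
  exact (hequiv M w).trans (h2 M w)
end

section
/- Let (M₁,w₁) and (M₂,w₂) be Routley–Meyer models, α an ordinal, and i,j ∈ {1,2} with i ≠ j. If there is a relevant directed α-bisimulation (⟨Z_{β1}, Z_{β2}⟩)_{β≤α} between M₁ and M₂ such that wᵢ Z_{β i} wⱼ for each β ≤ α (where Z_{β i} denotes the component from worlds of Mᵢ to worlds of Mⱼ), then for every formula φ of L_{∞ω}→ with dg(φ) ≤ α, Mᵢ, wᵢ ⊩ φ implies Mⱼ, wⱼ ⊩ φ. -/
universe u

/-! Preservation is proved by induction on `φ`, for both directions of the bisimulation at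
once and at every level `β ≤ α` with `deg φ ≤ β`: negation switches direction through the
star clause, and an implication of degree `γ + 1` is handled by the back clause from level
`γ + 1` to level `γ`, which transports the antecedent in the opposite direction. -/

namespace RelForm

variable {P : Type u}

theorem deg_le_deg_conj {ι : Type u} (f : ι → RelForm P) (i : ι) :
    (f i).deg ≤ (conj ι f).deg :=
  Ordinal.le_iSup (fun i => (f i).deg) i

theorem deg_le_deg_disj {ι : Type u} (f : ι → RelForm P) (i : ι) :
    (f i).deg ≤ (disj ι f).deg :=
  Ordinal.le_iSup (fun i => (f i).deg) i

theorem deg_imp (φ ψ : RelForm P) : (imp φ ψ).deg = Order.succ (max φ.deg ψ.deg) :=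
  (Order.succ_eq_add_one _).symm

end RelForm

namespace IsRelDirectedAlphaBisim

variable {P : Type u} {M₁ M₂ : RMModel P} {α : Ordinal.{u}}
  {Z₁ : Ordinal.{u} → M₁.W → M₂.W → Prop} {Z₂ : Ordinal.{u} → M₂.W → M₁.W → Prop}

theorem symm (h : IsRelDirectedAlphaBisim M₁ M₂ α Z₁ Z₂) :
    IsRelDirectedAlphaBisim M₂ M₁ α Z₂ Z₁ :=
  ⟨h.nonempty₂, h.nonempty₁, h.anti₂, h.anti₁, h.star₂, h.star₁, h.back₂, h.back₁,
    h.atom₂, h.atom₁⟩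

theorem back_of_succ_le (h : IsRelDirectedAlphaBisim M₁ M₂ α Z₁ Z₂) {β γ : Ordinal.{u}}
    (hγβ : Order.succ γ ≤ β) (hβ : β ≤ α) {x : M₁.W} {y b c : M₂.W} (hxy : Z₁ β x y)
    (hR : M₂.R y b c) : ∃ b' c', M₁.R x b' c' ∧ Z₂ γ b b' ∧ Z₁ γ c' c :=
  h.back₁ γ ((Order.succ_le_iff.mp hγβ).trans_le hβ) x y (h.anti₁ _ _ hγβ hβ x y hxy) b c hR

theorem sat_of_sat (h : IsRelDirectedAlphaBisim M₁ M₂ α Z₁ Z₂) (φ : RelForm P)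
    {β : Ordinal.{u}} (hβ : β ≤ α) (hφ : φ.deg ≤ β) {x : M₁.W} {y : M₂.W}
    (hxy : Z₁ β x y) (hx : M₁.sat x φ) : M₂.sat y φ := by
  induction φ generalizing M₁ M₂ β x y with
  | atom p => exact h.atom₁ β hβ x y hxy p hx
  | bot => exact hx
  | neg φ ih => exact fun hy => hx (ih h.symm hβ hφ (h.star₁ β hβ x y hxy) hy)
  | conj ι f ih =>
    exact fun i => ih i h hβ ((RelForm.deg_le_deg_conj f i).trans hφ) hxy (hx i)
  | disj ι f ih =>
    obtain ⟨i, hi⟩ := hx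
    exact ⟨i, ih i h hβ ((RelForm.deg_le_deg_disj f i).trans hφ) hxy hi⟩
  | imp φ ψ ihφ ihψ =>
    intro b c hR hb
    set γ := max φ.deg ψ.deg
    have hγβ : Order.succ γ ≤ β := (RelForm.deg_imp φ ψ).symm ▸ hφ
    have hγα : γ ≤ α := ((Order.le_succ γ).trans hγβ).trans hβ
    obtain ⟨b', c', hR', hbb', hc'c⟩ := h.back_of_succ_le hγβ hβ hxy hR
    have hb' : M₁.sat b' φ := ihφ h.symm hγα (le_max_left _ _) hbb' hb
    exact ihψ h hγα (le_max_right _ _) hc'c (hx b' c' hR' hb')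

end IsRelDirectedAlphaBisim

/-- (Proposition 4.4, (ii) ⇒ (i).)  If there is a relevant
directed α-bisimulation `(⟨Z₁ β, Z₂ β⟩)_{β ≤ α}` between `M₁` and `M₂` with
`w₁ (Z₁ β) w₂` for each `β ≤ α`, then every formula of `L_{∞ω}→` of degree
`≤ α` satisfied at `w₁` in `M₁` is satisfied at `w₂` in `M₂`. -/
theorem alphaBisim_implies_degree_transfer {P : Type u} (M₁ M₂ : RMModel P)
    (w₁ : M₁.W) (w₂ : M₂.W) (α : Ordinal.{u})
    (Z₁ : Ordinal.{u} → M₁.W → M₂.W → Prop)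
    (Z₂ : Ordinal.{u} → M₂.W → M₁.W → Prop)
    (hZ : IsRelDirectedAlphaBisim M₁ M₂ α Z₁ Z₂)
    (hw : ∀ β ≤ α, Z₁ β w₁ w₂) :
    ∀ φ : RelForm P, φ.deg ≤ α → M₁.sat w₁ φ → M₂.sat w₂ φ :=
  fun φ hφ => hZ.sat_of_sat φ le_rfl hφ (hw α le_rfl)
end

section
/- Let (M₁,w₁) and (M₂,w₂) be Routley–Meyer models, α an ordinal, and i,j ∈ {1,2} with i ≠ j. If for every formula φ of L_{∞ω}→ with dg(φ) ≤ α, Mᵢ, wᵢ ⊩ φ implies Mⱼ, wⱼ ⊩ φ, then there is a relevant directed α-bisimulation (⟨Z_{β1}, Z_{β2}⟩)_{β≤α} between M₁ and M₂ such that wᵢ Z_{β i} wⱼ for each β ≤ α; indeed, the system of relations defined by x Z_{β 1} y iff every formula of degree ≤ β satisfied at x in M₁ is satisfied at y in M₂, and x Z_{β 2} y iff every formula of degree ≤ β satisfied at x in M₂ is satisfied at y in M₁, is such a relevant directed α-bisimulation. -/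
universe u

/-! The star clause holds because `x ⊩ ~φ` is `x* ⊮ φ` and negation keeps the degree. For the
back clause, if no `R`-successor pair `(b', c')` of `x` matches `(b, c)`, pick for each such pair
formulas `φ`, `ψ` of degree `≤ β` with `b ⊩ φ`, `c ⊮ ψ` and `b' ⊩ φ → c' ⊩ ψ`; then the
implication `⋀ φ → ⋁ ψ`, indexed by all these pairs, has degree `≤ β + 1`, holds at `x` but fails
at `y`. -/

namespace RelForm

variable {P : Type u} {β : Ordinal.{u}}

theorem deg_conj_le {ι : Type u} {f : ι → RelForm P} (h : ∀ i, (f i).deg ≤ β) :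
    (conj ι f).deg ≤ β :=
  ciSup_le' h

theorem deg_disj_le {ι : Type u} {f : ι → RelForm P} (h : ∀ i, (f i).deg ≤ β) :
    (disj ι f).deg ≤ β :=
  ciSup_le' h

theorem deg_imp_le_succ {φ ψ : RelForm P} (hφ : φ.deg ≤ β) (hψ : ψ.deg ≤ β) :
    (imp φ ψ).deg ≤ Order.succ β := by
  rw [deg, ← Order.succ_eq_add_one]
  exact Order.succ_le_succ (max_le hφ hψ)

end RelForm

namespace RMModel

variable {P : Type u} {A B : RMModel P} {β γ : Ordinal.{u}}

def TypeIncl (A B : RMModel P) (β : Ordinal.{u}) (x : A.W) (y : B.W) : Prop :=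
  ∀ φ : RelForm P, φ.deg ≤ β → A.sat x φ → B.sat y φ

namespace TypeIncl

variable {x : A.W} {y : B.W}

theorem mono (hβγ : β ≤ γ) (hxy : A.TypeIncl B γ x y) : A.TypeIncl B β x y :=
  fun φ hφ ↦ hxy φ (hφ.trans hβγ)

theorem star (hxy : A.TypeIncl B γ x y) : B.TypeIncl A γ (B.star y) (A.star x) := by
  intro φ hφ hy
  by_contra hx
  exact hxy (.neg φ) hφ hx hy

theorem val (hxy : A.TypeIncl B γ x y) {p : P} (hp : A.V p x) : B.V p y :=
  hxy (.atom p) (by simp [RelForm.deg]) hp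

theorem exists_separating_imp {b c : B.W} {b' c' : A.W}
    (h : B.TypeIncl A β b b' → ¬ A.TypeIncl B β c' c) :
    ∃ φ ψ : RelForm P, φ.deg ≤ β ∧ ψ.deg ≤ β ∧ B.sat b φ ∧ ¬ B.sat c ψ ∧
      (A.sat b' φ → A.sat c' ψ) := by
  by_cases hb : B.TypeIncl A β b b'
  · obtain ⟨ψ, hψ, hc', hc⟩ : ∃ ψ : RelForm P, ψ.deg ≤ β ∧ A.sat c' ψ ∧ ¬ B.sat c ψ := by
      simpa [TypeIncl] using h hb
    exact ⟨.neg .bot, ψ, by simp [RelForm.deg], hψ, id, hc, fun _ ↦ hc'⟩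
  · obtain ⟨φ, hφ, hb, hb'⟩ : ∃ φ : RelForm P, φ.deg ≤ β ∧ B.sat b φ ∧ ¬ A.sat b' φ := by
      simpa [TypeIncl] using hb
    exact ⟨φ, .bot, hφ, by simp [RelForm.deg], hb, id, fun h ↦ absurd h hb'⟩

theorem exists_R_of_succ (hxy : A.TypeIncl B (Order.succ β) x y) {b c : B.W}
    (hR : B.R y b c) :
    ∃ b' c', A.R x b' c' ∧ B.TypeIncl A β b b' ∧ A.TypeIncl B β c' c := by
  by_contra! hsep
  choose Φ Ψ hΦ hΨ hb hc hsucc using fun i : {p : A.W × A.W // A.R x p.1 p.2} ↦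
    exists_separating_imp (hsep i.1.1 i.1.2 i.2)
  have hx : A.sat x (.imp (.conj _ Φ) (.disj _ Ψ)) := fun b' c' hR' hb' ↦
    ⟨⟨(b', c'), hR'⟩, hsucc ⟨(b', c'), hR'⟩ (hb' _)⟩
  obtain ⟨i, hi⟩ := hxy _ (RelForm.deg_imp_le_succ (RelForm.deg_conj_le hΦ)
    (RelForm.deg_disj_le hΨ)) hx b c hR hb
  exact hc i hi

end TypeIncl

end RMModel

/-- (Proposition 4.4, (i) ⇒ (ii).)  If every formula of
`L_{∞ω}→` of degree `≤ α` satisfied at `w₁` in `M₁` is satisfied at `w₂` in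
`M₂`, then the canonical system of relations (given by inclusion of relevant
types up to degree `β`) is a relevant directed α-bisimulation between `M₁` and
`M₂` relating `w₁` to `w₂` at every level `β ≤ α`. -/
theorem degree_transfer_implies_alphaBisim {P : Type u} (M₁ M₂ : RMModel P)
    (w₁ : M₁.W) (w₂ : M₂.W) (α : Ordinal.{u})
    (h : ∀ φ : RelForm P, φ.deg ≤ α → M₁.sat w₁ φ → M₂.sat w₂ φ) :
    IsRelDirectedAlphaBisim M₁ M₂ α
      (fun β x y => ∀ φ : RelForm P, φ.deg ≤ β → M₁.sat x φ → M₂.sat y φ)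
      (fun β x y => ∀ φ : RelForm P, φ.deg ≤ β → M₂.sat x φ → M₁.sat y φ) ∧
    ∀ β ≤ α, ∀ φ : RelForm P, φ.deg ≤ β → M₁.sat w₁ φ → M₂.sat w₂ φ := by
  have hw : ∀ β ≤ α, M₁.TypeIncl M₂ β w₁ w₂ := fun _ hβ ↦ RMModel.TypeIncl.mono hβ h
  refine ⟨
    { nonempty₁ := fun β hβ ↦ ⟨w₁, w₂, hw β hβ⟩
      nonempty₂ := fun β hβ ↦ ⟨_, _, (hw β hβ).star⟩
      anti₁ := fun _ _ hβγ _ _ _ ↦ RMModel.TypeIncl.mono hβγ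
      anti₂ := fun _ _ hβγ _ _ _ ↦ RMModel.TypeIncl.mono hβγ
      star₁ := fun _ _ _ _ ↦ RMModel.TypeIncl.star
      star₂ := fun _ _ _ _ ↦ RMModel.TypeIncl.star
      back₁ := fun _ _ _ _ hxy _ _ ↦ RMModel.TypeIncl.exists_R_of_succ hxy
      back₂ := fun _ _ _ _ hxy _ _ ↦ RMModel.TypeIncl.exists_R_of_succ hxy
      atom₁ := fun _ _ _ _ hxy _ ↦ RMModel.TypeIncl.val hxy
      atom₂ := fun _ _ _ _ hxy _ ↦ RMModel.TypeIncl.val hxy }, hw⟩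
end

section
/- (Relevant Karp Theorem, hard direction) Let (M₁,w₁) and (M₂,w₂) be Routley–Meyer models and i,j ∈ {1,2} with i ≠ j. If for every formula φ of L_{∞ω}→, Mᵢ, wᵢ ⊩ φ implies Mⱼ, wⱼ ⊩ φ, then there is a relevant directed bisimulation ⟨Z₁,Z₂⟩ between M₁ and M₂ with wᵢ Zᵢ wⱼ; indeed, the pair of relations defined by x Z₁ y iff every L_{∞ω}→ formula satisfied at x in M₁ is satisfied at y in M₂, and x Z₂ y iff every L_{∞ω}→ formula satisfied at x in M₂ is satisfied at y in M₁, is such a relevant directed bisimulation. -/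
universe u

lemma karp_back_aux {P : Type u} (Mi Mj : RMModel P) (x : Mi.W) (y : Mj.W)
    (hxy : ∀ φ : RelForm P, Mi.sat x φ → Mj.sat y φ)
    {b c : Mj.W} (hR : Mj.R y b c) :
    ∃ b' c', Mi.R x b' c' ∧ (∀ φ : RelForm P, Mj.sat b φ → Mi.sat b' φ) ∧
      (∀ φ : RelForm P, Mi.sat c' φ → Mj.sat c φ) := by
  classical
  by_contra hcon
  push_neg at hcon
  set ι : Type u := {q : Mi.W × Mi.W // Mi.R x q.1 q.2} with hι
  have D : ∀ q : ι, (∃ φ : RelForm P, Mj.sat b φ ∧ ¬ Mi.sat q.1.1 φ) ∨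
      (∃ ψ : RelForm P, Mi.sat q.1.2 ψ ∧ ¬ Mj.sat c ψ) := by
    intro q
    have hq := hcon q.1.1 q.1.2 q.2
    by_cases hfwd : ∀ φ : RelForm P, Mj.sat b φ → Mi.sat q.1.1 φ
    · exact Or.inr (hq hfwd)
    · push_neg at hfwd
      exact Or.inl hfwd
  let Φ : ι → RelForm P := fun q =>
    if h : ∃ φ : RelForm P, Mj.sat b φ ∧ ¬ Mi.sat q.1.1 φ then h.choose
    else RelForm.conj PEmpty.{u+1} (fun e => e.elim)
  let Ψ : ι → RelForm P := fun q =>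
    if h : ∃ φ : RelForm P, Mj.sat b φ ∧ ¬ Mi.sat q.1.1 φ then RelForm.bot
    else ((D q).resolve_left h).choose
  have hxθ : Mi.sat x (.imp (.conj ι Φ) (.disj ι Ψ)) := by
    intro a b0 hRab hconj
    by_cases h : ∃ φ : RelForm P, Mj.sat b φ ∧ ¬ Mi.sat a φ
    · exact absurd (by simpa [Φ, h] using hconj ⟨(a, b0), hRab⟩) h.choose_spec.2
    · refine ⟨⟨(a, b0), hRab⟩, ?_⟩
      simp only [Ψ, dif_neg h, RMModel.sat]
      exact ((D ⟨(a, b0), hRab⟩).resolve_left h).choose_spec.1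
  have hyθ := hxy _ hxθ
  have hbconj : Mj.sat b (.conj ι Φ) := by
    intro q
    by_cases h : ∃ φ : RelForm P, Mj.sat b φ ∧ ¬ Mi.sat q.1.1 φ
    · simpa [Φ, h] using h.choose_spec.1
    · simp only [Φ, dif_neg h, RMModel.sat]
      exact fun e => e.elim
  obtain ⟨q, hq⟩ := hyθ b c hR hbconj
  by_cases h : ∃ φ : RelForm P, Mj.sat b φ ∧ ¬ Mi.sat q.1.1 φ
  · simp [Ψ, h, RMModel.sat] at hq
  · exact ((D q).resolve_left h).choose_spec.2 (by simpa [Ψ, dif_neg h] using hq)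

lemma karp_star_aux {P : Type u} (Mi Mj : RMModel P) (x : Mi.W) (y : Mj.W)
    (hxy : ∀ φ : RelForm P, Mi.sat x φ → Mj.sat y φ) :
    ∀ φ : RelForm P, Mj.sat (Mj.star y) φ → Mi.sat (Mi.star x) φ := by
  intro φ hφ
  by_contra hx
  exact hxy (.neg φ) hx hφ

/-- (Relevant Karp theorem, hard direction.)  If every formula
of `L_{∞ω}→` satisfied at `w₁` in `M₁` is satisfied at `w₂` in `M₂`, then the
canonical pair of relations (inclusion of relevant types) is a relevant
directed bisimulation between `M₁` and `M₂` relating `w₁` to `w₂`. -/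
theorem karp_hard_direction {P : Type u} (M₁ M₂ : RMModel P)
    (w₁ : M₁.W) (w₂ : M₂.W)
    (h : ∀ φ : RelForm P, M₁.sat w₁ φ → M₂.sat w₂ φ) :
    IsRelDirectedBisim (Set.univ : Set P) M₁ M₂
      (fun x y => ∀ φ : RelForm P, M₁.sat x φ → M₂.sat y φ)
      (fun x y => ∀ φ : RelForm P, M₂.sat x φ → M₁.sat y φ) ∧
    (∀ φ : RelForm P, M₁.sat w₁ φ → M₂.sat w₂ φ) := by
  refine ⟨⟨⟨w₁, w₂, h⟩, ⟨M₂.star w₂, M₁.star w₁, karp_star_aux M₁ M₂ w₁ w₂ h⟩,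
    fun x y hxy => karp_star_aux M₁ M₂ x y hxy,
    fun x y hxy => karp_star_aux M₂ M₁ x y hxy,
    fun x y b c hxy hR => karp_back_aux M₁ M₂ x y hxy hR,
    fun x y b c hxy hR => karp_back_aux M₂ M₁ x y hxy hR,
    fun x y hxy p _ hp => hxy (.atom p) hp,
    fun x y hxy p _ hp => hxy (.atom p) hp⟩, h⟩
end

section
/- (Relevant Scott Theorem, general form) Let (M₁,w₁) and (M₂,w₂) be two Routley–Meyer models in a class K of B-models, let κ be the least infinite cardinal ≥ sup{|W₁|, |W₂|}, and let λ = sup{|PROP|, 2^κ}. Then for i,j ∈ {1,2} with i ≠ j there is a formula θ^{wᵢ} of L_{λ⁺ω}→ such that (1) Mᵢ, wᵢ ⊩ θ^{wᵢ}, and (2) Mⱼ, wⱼ ⊩ θ^{wᵢ} if and only if there is a relevant directed bisimulation (Zᵢ, Zⱼ) between Mᵢ and Mⱼ such that wᵢ Zᵢ wⱼ. -/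
universe u

namespace RelScott

open Cardinal

variable {P : Type u}

@[simp] theorem sat_atom (M : RMModel P) (w : M.W) (p : P) :
    M.sat w (.atom p) ↔ M.V p w := Iff.rfl

@[simp] theorem sat_neg (M : RMModel P) (w : M.W) (φ : RelForm P) :
    M.sat w (.neg φ) ↔ ¬ M.sat (M.star w) φ := Iff.rfl

@[simp] theorem sat_conj (M : RMModel P) (w : M.W) (ι : Type u) (f : ι → RelForm P) :
    M.sat w (.conj ι f) ↔ ∀ i, M.sat w (f i) := Iff.rfl

@[simp] theorem sat_disj (M : RMModel P) (w : M.W) (ι : Type u) (f : ι → RelForm P) :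
    M.sat w (.disj ι f) ↔ ∃ i, M.sat w (f i) := Iff.rfl

@[simp] theorem sat_imp (M : RMModel P) (w : M.W) (φ ψ : RelForm P) :
    M.sat w (.imp φ ψ) ↔ ∀ a b, M.R w a b → M.sat a φ → M.sat b ψ := Iff.rfl

/-- The body of the mutual recursion building the Hintikka formulas. -/
def TPbody (M : RMModel P) {I : Type u} [LT I] (i : I)
    (prior : ∀ j : I, j < i → M.W → RelForm P × RelForm P) (x : M.W) :
    RelForm P × RelForm P :=
  (RelForm.conj
      ({p : P // M.V p x} ⊕ {p : P // ¬ M.V p (M.star x)} ⊕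
        ({j : I // j < i} × Set {bc : M.W × M.W // M.R x bc.1 bc.2}) ⊕
        ({j : I // j < i} × {bc : M.W × M.W // M.R (M.star x) bc.1 bc.2}))
      (fun k =>
        match k with
        | .inl p => .atom p.1
        | .inr (.inl p) => .neg (.atom p.1)
        | .inr (.inr (.inl jS)) =>
            .imp (.conj ↥jS.2 fun s => (prior jS.1.1 jS.1.2 s.1.1.1).2)
              (.disj ↥(jS.2ᶜ) fun s => (prior jS.1.1 jS.1.2 s.1.1.2).1)
        | .inr (.inr (.inr jbc)) =>
            .neg (.imp (prior jbc.1.1 jbc.1.2 jbc.2.1.1).1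
              (prior jbc.1.1 jbc.1.2 jbc.2.1.2).2)),
   RelForm.disj
      ({p : P // ¬ M.V p x} ⊕ {p : P // M.V p (M.star x)} ⊕
        ({j : I // j < i} × {bc : M.W × M.W // M.R x bc.1 bc.2}) ⊕
        ({j : I // j < i} × Set {bc : M.W × M.W // M.R (M.star x) bc.1 bc.2}))
      (fun k =>
        match k with
        | .inl p => .atom p.1
        | .inr (.inl p) => .neg (.atom p.1)
        | .inr (.inr (.inl juw)) =>
            .imp (prior juw.1.1 juw.1.2 juw.2.1.1).1 (prior juw.1.1 juw.1.2 juw.2.1.2).2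
        | .inr (.inr (.inr jS)) =>
            .neg (.imp (.conj ↥jS.2 fun s => (prior jS.1.1 jS.1.2 s.1.1.1).2)
              (.disj ↥(jS.2ᶜ) fun s => (prior jS.1.1 jS.1.2 s.1.1.2).1))))

/-- The Hintikka formula pair, by well-founded recursion. -/
noncomputable def TP (M : RMModel P) {I : Type u} [LinearOrder I] [WellFoundedLT I] :
    I → M.W → RelForm P × RelForm P :=
  WellFounded.fix wellFounded_lt (fun i prior => TPbody M i prior)

theorem TP_eq (M : RMModel P) {I : Type u} [LinearOrder I] [WellFoundedLT I] (i : I) :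
    TP M i = TPbody M i (fun j _ => TP M j) :=
  WellFounded.fix_eq _ _ _

/-- The positive Hintikka formula. -/
noncomputable def Th (M : RMModel P) {I : Type u} [LinearOrder I] [WellFoundedLT I]
    (i : I) (x : M.W) : RelForm P := (TP M i x).1

/-- The negative Hintikka formula. -/
noncomputable def Ps (M : RMModel P) {I : Type u} [LinearOrder I] [WellFoundedLT I]
    (i : I) (x : M.W) : RelForm P := (TP M i x).2

variable {I : Type u} [LinearOrder I] [WellFoundedLT I]

/-- The canonical rank-`i` forward relation. -/
def Zr (M N : RMModel P) (i : I) (x : M.W) (y : N.W) : Prop := N.sat y (Th M i x)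

/-- The canonical rank-`i` backward relation. -/
def Yr (M N : RMModel P) (i : I) (b : N.W) (v : M.W) : Prop := ¬ N.sat b (Ps M i v)

theorem zr_iff (M N : RMModel P) (i : I) (x : M.W) (y : N.W) :
    Zr M N i x y ↔
      (∀ p, M.V p x → N.V p y) ∧
      (∀ p, N.V p (N.star y) → M.V p (M.star x)) ∧
      (∀ j, j < i →
        (∀ b c, N.R y b c → ∃ b' c', M.R x b' c' ∧ Yr M N j b b' ∧ Zr M N j c' c) ∧
        (∀ b c, M.R (M.star x) b c →
          ∃ b' c', N.R (N.star y) b' c' ∧ Zr M N j b b' ∧ Yr M N j c' c)) := by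
  classical
  show N.sat y (TP M i x).1 ↔ _
  rw [TP_eq]
  constructor
  · intro h
    refine ⟨fun p hp => h (Sum.inl ⟨p, hp⟩), fun p hpy => by
        by_contra hx
        exact h (Sum.inr (Sum.inl ⟨p, hx⟩)) hpy,
      fun j hj => ⟨?_, ?_⟩⟩
    · intro b c hbc
      have h3 := h (Sum.inr (Sum.inr (Sum.inl
        ⟨⟨j, hj⟩, {s : {bc : M.W × M.W // M.R x bc.1 bc.2} | N.sat b (Ps M j s.1.1)}⟩)))
      obtain ⟨s, hs⟩ := h3 b c hbc (fun s => s.2)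
      exact ⟨s.1.1.1, s.1.1.2, s.1.2, s.2, hs⟩
    · intro b c hbc
      have h3 := h (Sum.inr (Sum.inr (Sum.inr ⟨⟨j, hj⟩, ⟨(b, c), hbc⟩⟩)))
      rw [sat_neg, sat_imp] at h3
      push_neg at h3
      obtain ⟨b', c', hR, hZ, hY⟩ := h3
      exact ⟨b', c', hR, hZ, hY⟩
  · rintro ⟨h1, h2, h3⟩ (p | p | ⟨j, S⟩ | ⟨j, bc⟩)
    · exact h1 p.1 p.2
    · exact fun hv => p.2 (h2 p.1 hv)
    · intro b c hbc hant
      obtain ⟨b', c', hR, hY, hZ⟩ := (h3 j.1 j.2).1 b c hbc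
      have hmem : (⟨(b', c'), hR⟩ : {bc : M.W × M.W // M.R x bc.1 bc.2}) ∈ Sᶜ := by
        intro hmem
        exact hY (hant ⟨_, hmem⟩)
      exact ⟨⟨_, hmem⟩, hZ⟩
    · rw [sat_neg, sat_imp]
      intro him
      obtain ⟨b', c', hR, hZ, hY⟩ := (h3 j.1 j.2).2 bc.1.1 bc.1.2 bc.2
      exact hY (him b' c' hR hZ)

theorem yr_iff (M N : RMModel P) (i : I) (b : N.W) (v : M.W) :
    Yr M N i b v ↔
      (∀ p, N.V p b → M.V p v) ∧
      (∀ p, M.V p (M.star v) → N.V p (N.star b)) ∧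
      (∀ j, j < i →
        (∀ u w, M.R v u w → ∃ u' w', N.R b u' w' ∧ Zr M N j u u' ∧ Yr M N j w' w) ∧
        (∀ u w, N.R (N.star b) u w →
          ∃ u' w', M.R (M.star v) u' w' ∧ Yr M N j u u' ∧ Zr M N j w' w)) := by
  classical
  show ¬ N.sat b (TP M i v).2 ↔ _
  rw [TP_eq]
  constructor
  · intro h
    refine ⟨?_, ?_, fun j hj => ⟨?_, ?_⟩⟩
    · intro p hp
      by_contra hv
      exact h ⟨Sum.inl ⟨p, hv⟩, hp⟩
    · intro p hp
      by_contra hb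
      exact h ⟨Sum.inr (Sum.inl ⟨p, hp⟩), hb⟩
    · intro u w huw
      by_contra hcon
      push_neg at hcon
      refine h ⟨Sum.inr (Sum.inr (Sum.inl ⟨⟨j, hj⟩, ⟨(u, w), huw⟩⟩)), ?_⟩
      intro u' w' hR hu'
      exact not_not.mp (hcon u' w' hR hu')
    · intro u w huw
      by_contra hcon
      push_neg at hcon
      refine h ⟨Sum.inr (Sum.inr (Sum.inr
        ⟨⟨j, hj⟩, {s : {bc : M.W × M.W // M.R (M.star v) bc.1 bc.2} |
          N.sat u (Ps M j s.1.1)}⟩)), ?_⟩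
      intro him
      obtain ⟨s, hs⟩ := him u w huw (fun s => s.2)
      exact hcon s.1.1.1 s.1.1.2 s.1.2 s.2 hs
  · rintro ⟨h1, h2, h3⟩ ⟨(p | p | ⟨j, uw⟩ | ⟨j, S⟩), hk⟩
    · exact p.2 (h1 p.1 hk)
    · exact hk (h2 p.1 p.2)
    · obtain ⟨u', w', hR, hZ, hY⟩ := (h3 j.1 j.2).1 uw.1.1 uw.1.2 uw.2
      exact hY (hk u' w' hR hZ)
    · refine hk ?_
      intro u w huw hant
      obtain ⟨u', w', hR, hY, hZ⟩ := (h3 j.1 j.2).2 u w huw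
      have hmem : (⟨(u', w'), hR⟩ : {bc : M.W × M.W // M.R (M.star v) bc.1 bc.2}) ∉ S :=
        fun hm => hY (hant ⟨_, hm⟩)
      exact ⟨⟨_, hmem⟩, hZ⟩

theorem zr_anti (M N : RMModel P) {i j : I} (hji : j ≤ i) {x : M.W} {y : N.W}
    (h : Zr M N i x y) : Zr M N j x y := by
  rw [zr_iff] at h ⊢
  exact ⟨h.1, h.2.1, fun k hk => h.2.2 k (lt_of_lt_of_le hk hji)⟩

theorem zr_yr_refl (M : RMModel P) (i : I) :
    ∀ x : M.W, Zr M M i x x ∧ Yr M M i x x := by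
  induction i using WellFoundedLT.induction with
  | _ i IH =>
    intro x
    constructor
    · rw [zr_iff]
      refine ⟨fun p hp => hp, fun p hp => hp, fun j hj => ⟨?_, ?_⟩⟩
      · exact fun b c hbc => ⟨b, c, hbc, (IH j hj b).2, (IH j hj c).1⟩
      · exact fun b c hbc => ⟨b, c, hbc, (IH j hj b).1, (IH j hj c).2⟩
    · rw [yr_iff]
      refine ⟨fun p hp => hp, fun p hp => hp, fun j hj => ⟨?_, ?_⟩⟩
      · exact fun u w huw => ⟨u, w, huw, (IH j hj u).1, (IH j hj w).2⟩
      · exact fun u w huw => ⟨u, w, huw, (IH j hj u).2, (IH j hj w).1⟩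

theorem bisim_le (M N : RMModel P) (Z₁ : M.W → N.W → Prop) (Z₂ : N.W → M.W → Prop)
    (hb : IsRelDirectedBisim (Set.univ : Set P) M N Z₁ Z₂) (i : I) :
    (∀ x y, Z₁ x y → Zr M N i x y) ∧ (∀ b v, Z₂ b v → Yr M N i b v) := by
  induction i using WellFoundedLT.induction with
  | _ i IH =>
    constructor
    · intro x y hxy
      rw [zr_iff]
      refine ⟨fun p hp => hb.atom₁ x y hxy p trivial hp,
        fun p hp => hb.atom₂ _ _ (hb.star₁ x y hxy) p trivial hp,
        fun j hj => ⟨?_, ?_⟩⟩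
      · intro b c hbc
        obtain ⟨b', c', hR, h2, h1⟩ := hb.back₁ x y b c hxy hbc
        exact ⟨b', c', hR, (IH j hj).2 b b' h2, (IH j hj).1 c' c h1⟩
      · intro b c hbc
        obtain ⟨b', c', hR, h1, h2⟩ := hb.back₂ (N.star y) (M.star x) b c (hb.star₁ x y hxy) hbc
        exact ⟨b', c', hR, (IH j hj).1 b b' h1, (IH j hj).2 c' c h2⟩
    · intro b v hbv
      rw [yr_iff]
      refine ⟨fun p hp => hb.atom₂ b v hbv p trivial hp,
        fun p hp => hb.atom₁ _ _ (hb.star₂ b v hbv) p trivial hp,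
        fun j hj => ⟨?_, ?_⟩⟩
      · intro u w huw
        obtain ⟨u', w', hR, h1, h2⟩ := hb.back₂ b v u w hbv huw
        exact ⟨u', w', hR, (IH j hj).1 u u' h1, (IH j hj).2 w' w h2⟩
      · intro u w huw
        obtain ⟨u', w', hR, h2, h1⟩ := hb.back₁ (M.star v) (N.star b) u w (hb.star₂ b v hbv) huw
        exact ⟨u', w', hR, (IH j hj).2 u u' h2, (IH j hj).1 w' w h1⟩

theorem zr_star (M N : RMModel P) (hMs : ∀ x, M.star (M.star x) = x)
    (hNs : ∀ y, N.star (N.star y) = y) (i : I) (x : M.W) (y : N.W)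
    (h : Zr M N i x y) : Yr M N i (N.star y) (M.star x) := by
  rw [zr_iff] at h
  rw [yr_iff]
  refine ⟨h.2.1, fun p hp => by rw [hNs]; exact h.1 p (by rwa [hMs] at hp),
    fun k hk => ⟨(h.2.2 k hk).2, ?_⟩⟩
  intro u w huw
  rw [hNs] at huw
  obtain ⟨u', w', hR, h1, h2⟩ := (h.2.2 k hk).1 u w huw
  exact ⟨u', w', by rwa [hMs], h1, h2⟩

theorem yr_star (M N : RMModel P) (hMs : ∀ x, M.star (M.star x) = x)
    (hNs : ∀ y, N.star (N.star y) = y) (i : I) (b : N.W) (v : M.W)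
    (h : Yr M N i b v) : Zr M N i (M.star v) (N.star b) := by
  rw [yr_iff] at h
  rw [zr_iff]
  refine ⟨h.2.1, fun p hp => by rw [hMs]; exact h.1 p (by rwa [hNs] at hp),
    fun k hk => ⟨(h.2.2 k hk).2, ?_⟩⟩
  intro u w huw
  rw [hMs] at huw
  obtain ⟨u', w', hR, h1, h2⟩ := (h.2.2 k hk).1 u w huw
  exact ⟨u', w', by rwa [hNs], h1, h2⟩

theorem fix_bisim (M N : RMModel P) (hMs : ∀ x, M.star (M.star x) = x)
    (hNs : ∀ y, N.star (N.star y) = y) {i j : I} (hij : i < j)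
    (hZ : Zr M N i = Zr M N j) (hY : Yr M N i = Yr M N j)
    {x₀ : M.W} {y₀ : N.W} (h0 : Zr M N i x₀ y₀) :
    IsRelDirectedBisim (Set.univ : Set P) M N (Zr M N i) (Yr M N i) where
  nonempty₁ := ⟨x₀, y₀, h0⟩
  nonempty₂ := ⟨N.star y₀, M.star x₀, zr_star M N hMs hNs i x₀ y₀ h0⟩
  star₁ := fun x y h => zr_star M N hMs hNs i x y h
  star₂ := fun x y h => yr_star M N hMs hNs i x y h
  back₁ := by
    intro x y b c hxy hbc
    have hj' : Zr M N j x y := by rw [← hZ]; exact hxy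
    rw [zr_iff] at hj'
    exact (hj'.2.2 i hij).1 b c hbc
  back₂ := by
    intro x y b c hxy hbc
    have hj' : Yr M N j x y := by rw [← hY]; exact hxy
    rw [yr_iff] at hj'
    exact (hj'.2.2 i hij).1 b c hbc
  atom₁ := by
    intro x y h p _ hp
    exact ((zr_iff M N i x y).mp h).1 p hp
  atom₂ := by
    intro x y h p _ hp
    exact ((yr_iff M N i x y).mp h).1 p hp

theorem tp_indexBound (M : RMModel P) (κ lam : Cardinal.{u})
    (hκ : ℵ₀ ≤ κ) (hW : #M.W ≤ κ) (hP : #P ≤ lam) (h2 : 2 ^ κ ≤ lam)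
    (hI : ∀ i : I, #{j : I // j < i} ≤ lam) (i : I) :
    ∀ x : M.W, (Th M i x).indexBound (Order.succ lam) ∧
      (Ps M i x).indexBound (Order.succ lam) := by
  induction i using WellFoundedLT.induction with
  | _ i IH =>
    intro x
    have hκlam : κ ≤ lam := (cantor κ).le.trans h2
    have hlaminf : ℵ₀ ≤ lam := hκ.trans hκlam
    have hpair : #(M.W × M.W) ≤ κ := by
      simp only [mk_prod, lift_id]
      calc #M.W * #M.W ≤ κ * κ := mul_le_mul' hW hW
        _ = κ := mul_eq_self hκ
    have hsubpair : ∀ Q : M.W × M.W → Prop, #{bc : M.W × M.W // Q bc} ≤ lam :=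
      fun Q => ((mk_subtype_le _).trans hpair).trans hκlam
    have hset : ∀ Q : M.W × M.W → Prop, #(Set {bc : M.W × M.W // Q bc}) ≤ lam := by
      intro Q
      rw [mk_set]
      exact (power_le_power_left two_ne_zero ((mk_subtype_le _).trans hpair)).trans h2
    have hprod : ∀ (A B : Type u), #A ≤ lam → #B ≤ lam → #(A × B) ≤ lam := by
      intro A B hA hB
      simp only [mk_prod, lift_id]
      calc #A * #B ≤ lam * lam := mul_le_mul' hA hB
        _ = lam := mul_eq_self hlaminf
    have hsum : ∀ (A B : Type u), #A ≤ lam → #B ≤ lam → #(A ⊕ B) ≤ lam := by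
      intro A B hA hB
      simp only [mk_sum, lift_id]
      exact add_le_of_le hlaminf hA hB
    have hPsub : ∀ Q : P → Prop, #{p : P // Q p} ≤ lam :=
      fun Q => (mk_subtype_le _).trans hP
    have hS : ∀ (α : Type u) (hα : #α ≤ lam) (S : Set α), #↥S < Order.succ lam :=
      fun α hα S => Order.lt_succ_iff.mpr ((mk_set_le S).trans hα)
    constructor
    · show RelForm.indexBound _ (TP M i x).1
      rw [TP_eq]
      refine ⟨Order.lt_succ_iff.mpr (hsum _ _ (hPsub _) (hsum _ _ (hPsub _)
        (hsum _ _ (hprod _ _ (hI i) (hset _)) (hprod _ _ (hI i) (hsubpair _))))), ?_⟩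
      rintro (p | p | ⟨j, S⟩ | ⟨j, bc⟩)
      · exact trivial
      · exact trivial
      · exact ⟨⟨hS _ (hsubpair _) S, fun s => (IH j.1 j.2 s.1.1.1).2⟩,
          ⟨hS _ (hsubpair _) Sᶜ, fun s => (IH j.1 j.2 s.1.1.2).1⟩⟩
      · exact ⟨(IH j.1 j.2 bc.1.1).1, (IH j.1 j.2 bc.1.2).2⟩
    · show RelForm.indexBound _ (TP M i x).2
      rw [TP_eq]
      refine ⟨Order.lt_succ_iff.mpr (hsum _ _ (hPsub _) (hsum _ _ (hPsub _)
        (hsum _ _ (hprod _ _ (hI i) (hsubpair _)) (hprod _ _ (hI i) (hset _))))), ?_⟩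
      rintro (p | p | ⟨j, uw⟩ | ⟨j, S⟩)
      · exact trivial
      · exact trivial
      · exact ⟨(IH j.1 j.2 uw.1.1).1, (IH j.1 j.2 uw.1.2).2⟩
      · exact ⟨⟨hS _ (hsubpair _) S, fun s => (IH j.1 j.2 s.1.1.1).2⟩,
          ⟨hS _ (hsubpair _) Sᶜ, fun s => (IH j.1 j.2 s.1.1.2).1⟩⟩

end RelScott

/-- (Relevant Scott theorem, general form.)  Let `(M₁, w₁)`
and `(M₂, w₂)` be pointed models in a class `K` of B-models, `κ` the least
infinite cardinal `≥ sup {|W₁|, |W₂|}` and `λ = sup {|PROP|, 2^κ}`.  Then there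
is a formula `θ` of `L_{λ⁺ω}→` true at `w₁` in `M₁`, and true at `w₂` in `M₂`
iff there is a relevant directed bisimulation between `M₁` and `M₂` relating
`w₁` to `w₂`. -/
theorem relevant_scott_general {P : Type u}
    (K : ∀ M : RMModel P, M.W → Prop)
    (hK : ∀ (M : RMModel P) (T : M.W), K M T → IsBModel M T)
    (M₁ M₂ : RMModel P) (w₁ : M₁.W) (w₂ : M₂.W)
    (h₁ : K M₁ w₁) (h₂ : K M₂ w₂)
    (κ lam : Cardinal.{u})
    (hκ : κ = max Cardinal.aleph0.{u} (max (Cardinal.mk M₁.W) (Cardinal.mk M₂.W)))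
    (hlam : lam = max (Cardinal.mk P) (2 ^ κ)) :
    ∃ θ : RelForm P, θ.indexBound (Order.succ lam) ∧
      M₁.sat w₁ θ ∧
      (M₂.sat w₂ θ ↔
        ∃ (Z₁ : M₁.W → M₂.W → Prop) (Z₂ : M₂.W → M₁.W → Prop),
          IsRelDirectedBisim (Set.univ : Set P) M₁ M₂ Z₁ Z₂ ∧ Z₁ w₁ w₂) := by
  classical
  have hs1 : ∀ x, M₁.star (M₁.star x) = x := (hK M₁ w₁ h₁).2.2.1
  have hs2 : ∀ y, M₂.star (M₂.star y) = y := (hK M₂ w₂ h₂).2.2.1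
  have hκinf : Cardinal.aleph0.{u} ≤ κ := hκ ▸ le_max_left _ _
  have hW1 : Cardinal.mk M₁.W ≤ κ := hκ ▸ (le_max_left _ _).trans (le_max_right _ _)
  have hW2 : Cardinal.mk M₂.W ≤ κ := hκ ▸ (le_max_right _ _).trans (le_max_right _ _)
  have hP : Cardinal.mk P ≤ lam := hlam ▸ le_max_left _ _
  have h2κ : ((2 : Cardinal.{u}) ^ κ) ≤ lam := hlam ▸ le_max_right _ _
  haveI hwo : IsWellOrder (Order.succ ((2 : Cardinal.{u}) ^ κ)).ord.ToType (· < ·) :=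
    isWellOrder_lt
  have hI : ∀ i : (Order.succ ((2 : Cardinal.{u}) ^ κ)).ord.ToType, Cardinal.mk {j // j < i} ≤ lam := by
    intro i
    calc Cardinal.mk {j // j < i}
        = (Ordinal.typein  (· < ·) i).card := Ordinal.card_typein i
      _ ≤ ((2 : Cardinal.{u}) ^ κ) := Order.lt_succ_iff.mp (Cardinal.card_typein_toType_lt (Order.succ (((2 : Cardinal.{u}) ^ κ))) i)
      _ ≤ lam := h2κ
  -- pigeonhole: the canonical relations must repeat
  have h2κinf : Cardinal.aleph0.{u} ≤ ((2 : Cardinal.{u}) ^ κ) := hκinf.trans (Cardinal.cantor κ).le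
  have hfun : ∀ (A B : Type u), Cardinal.mk (A → B → Prop) ≤ 2 ^ (Cardinal.mk (A × B)) := by
    intro A B
    rw [← Cardinal.mk_set]
    exact Cardinal.mk_le_of_injective (f := fun (Z : A → B → Prop) => {p : A × B | Z p.1 p.2})
      (by
        intro Z Z' h
        funext a b
        have := Set.ext_iff.mp h (a, b)
        simpa using propext (by simpa using this))
  have hpow : ∀ (A B : Type u), Cardinal.mk A ≤ κ → Cardinal.mk B ≤ κ →
      Cardinal.mk (A → B → Prop) ≤ ((2 : Cardinal.{u}) ^ κ) := by
    intro A B hA hB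
    refine (hfun A B).trans (Cardinal.power_le_power_left two_ne_zero ?_)
    simp only [Cardinal.mk_prod, Cardinal.lift_id]
    calc Cardinal.mk A * Cardinal.mk B ≤ κ * κ := mul_le_mul' hA hB
      _ = κ := Cardinal.mul_eq_self hκinf
  have hT : Cardinal.mk ((M₁.W → M₂.W → Prop) × (M₂.W → M₁.W → Prop)) ≤ ((2 : Cardinal.{u}) ^ κ) := by
    simp only [Cardinal.mk_prod, Cardinal.lift_id]
    calc _ ≤ (((2 : Cardinal.{u}) ^ κ)) * (((2 : Cardinal.{u}) ^ κ)) := mul_le_mul' (hpow _ _ hW1 hW2) (hpow _ _ hW2 hW1)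
      _ = ((2 : Cardinal.{u}) ^ κ) := Cardinal.mul_eq_self h2κinf
  have hninj : ¬ Function.Injective
      (fun i : (Order.succ ((2 : Cardinal.{u}) ^ κ)).ord.ToType => (RelScott.Zr M₁ M₂ i, RelScott.Yr M₁ M₂ i)) := by
    intro hinj
    have hle := Cardinal.mk_le_of_injective hinj
    rw [Cardinal.mk_toType, Cardinal.card_ord] at hle
    exact absurd (hle.trans hT) (not_le.mpr (Order.lt_succ (((2 : Cardinal.{u}) ^ κ))))
  obtain ⟨i, j, hijeq, hijne⟩ := Function.not_injective_iff.mp hninj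
  have hZeq := congrArg Prod.fst hijeq
  have hYeq := congrArg Prod.snd hijeq
  simp only at hZeq hYeq
  -- reduce to the case `i < j`
  have key : ∀ i j : (Order.succ ((2 : Cardinal.{u}) ^ κ)).ord.ToType, i < j →
      RelScott.Zr M₁ M₂ i = RelScott.Zr M₁ M₂ j →
      RelScott.Yr M₁ M₂ i = RelScott.Yr M₁ M₂ j →
      ∃ θ : RelForm P, θ.indexBound (Order.succ lam) ∧
        M₁.sat w₁ θ ∧
        (M₂.sat w₂ θ ↔
          ∃ (Z₁ : M₁.W → M₂.W → Prop) (Z₂ : M₂.W → M₁.W → Prop),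
            IsRelDirectedBisim (Set.univ : Set P) M₁ M₂ Z₁ Z₂ ∧ Z₁ w₁ w₂) := by
    intro i j hij hZ hY
    refine ⟨RelScott.Th M₁ i w₁,
      (RelScott.tp_indexBound M₁ κ lam hκinf hW1 hP h2κ hI i w₁).1,
      (RelScott.zr_yr_refl M₁ i w₁).1, ?_, ?_⟩
    · intro h
      exact ⟨RelScott.Zr M₁ M₂ i, RelScott.Yr M₁ M₂ i,
        RelScott.fix_bisim M₁ M₂ hs1 hs2 hij hZ hY h, h⟩
    · rintro ⟨Z₁, Z₂, hb, hw⟩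
      exact (RelScott.bisim_le M₁ M₂ Z₁ Z₂ hb i).1 w₁ w₂ hw
  obtain hlt | hlt := hijne.lt_or_gt
  · exact key i j hlt hZeq hYeq
  · exact key j i hlt hZeq.symm hYeq.symm
end
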